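/- arXiv:1108.2562 — 9 statements merged into one kernel-verified Lean document; each statement's English description precedes it below -/
import Mathlib

section
/- Let K be a nonempty compact metrizable topological space, let J : [0,∞) × K → ℝ be such that for every t ≥ 0 the function η ↦ J(t,η) is continuous on K, and let ω : [0,∞) → ℝ satisfy ω(T) → 0 as T → ∞ and J(t,η) ≤ J(T,η) + ω(T) for all η ∈ K and all 0 ≤ T ≤ t. Then there exist u⁰ ∈ K and an extended real number l with l < +∞ such that: (i) for every η ∈ K the limit lim_{t→∞} J(t,η) exists in the extended reals and is ≤ l; (ii) lim_{t→∞} J(t,u⁰) = l; (iii) lim_{t→∞} sup_{η∈K} J(t,η) = l. In particular lim_{t→∞} sup_{η∈K} J(t,η) = sup_{η∈K} lim_{t→∞} J(t,η) = lim_{t→∞} J(t,u⁰). -/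
/-!
Each `J(·, η)`, and also `V(t) = sup_η J(t, η)`, decreases up to the error `ω`, so it converges
in `EReal` to its `limsup`; that `limsup` lies below the value at `T` plus `ω(T)` for every `T ≥ 0`, hence is not `+∞`.
If `η_n` maximizes `J(n, ·)` and `u⁰` is a cluster point of `(η_n)`, letting `n → ∞` in
`V(n) ≤ J(T, η_n) + ω(T)` gives `l ≤ J(T, u⁰) + ω(T)` for all `T`, whence
`l ≤ lim J(·, u⁰) ≤ l`.
-/

open Filter Topology

-- The paper's Condition (e).
def AlmostAntitone (ω f : ℝ → ℝ) : Prop :=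
  ∀ T t, 0 ≤ T → T ≤ t → f t ≤ f T + ω T

lemma EReal.le_liminf_of_le_add_of_tendsto_zero {ι : Type*} {F : Filter ι} [F.NeBot]
    {f ω : ι → ℝ} (hω : Tendsto ω F (𝓝 0)) {a : EReal}
    (h : ∀ᶠ i in F, a ≤ ((f i + ω i : ℝ) : EReal)) :
    a ≤ liminf (fun i => (f i : EReal)) F := by
  have hω' : limsup (fun i => (ω i : EReal)) F = 0 := (EReal.tendsto_coe.2 hω).limsup_eq
  calc a ≤ liminf (fun i => ((ω i : EReal) + f i)) F := by
        refine le_liminf_of_le (by isBoundedDefault) ?_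
        simpa only [add_comm, EReal.coe_add] using h
    _ ≤ limsup (fun i => (ω i : EReal)) F + liminf (fun i => (f i : EReal)) F :=
        EReal.liminf_add_le (by simp [hω']) (by simp [hω'])
    _ = liminf (fun i => (f i : EReal)) F := by rw [hω', zero_add]

namespace AlmostAntitone

variable {ω f : ℝ → ℝ}

lemma limsup_le (hf : AlmostAntitone ω f) {T : ℝ} (hT : 0 ≤ T) :
    limsup (fun t => (f t : EReal)) atTop ≤ ((f T + ω T : ℝ) : EReal) :=
  limsup_le_of_le (by isBoundedDefault) <| (eventually_ge_atTop T).mono fun _ ht =>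
    EReal.coe_le_coe_iff.2 (hf T _ hT ht)

lemma limsup_ne_top (hf : AlmostAntitone ω f) : limsup (fun t => (f t : EReal)) atTop ≠ ⊤ :=
  ((hf.limsup_le le_rfl).trans_lt (EReal.coe_lt_top _)).ne

lemma tendsto_limsup (hf : AlmostAntitone ω f) (hω : Tendsto ω atTop (𝓝 0)) :
    Tendsto (fun t => (f t : EReal)) atTop (𝓝 (limsup (fun t => (f t : EReal)) atTop)) :=
  tendsto_of_liminf_eq_limsup (le_antisymm liminf_le_limsup <|
    EReal.le_liminf_of_le_add_of_tendsto_zero hω <|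
      (eventually_ge_atTop 0).mono fun _ hT => hf.limsup_le hT) rfl

lemma ciSup {K : Type*} [Nonempty K] {J : ℝ → K → ℝ} (hJ : ∀ η, AlmostAntitone ω (J · η))
    (hbdd : ∀ t, 0 ≤ t → BddAbove (Set.range (J t))) :
    AlmostAntitone ω fun t => ⨆ η, J t η := fun T t hT hTt =>
  ciSup_le fun η => (hJ η T t hT hTt).trans <| add_le_add_left (le_ciSup (hbdd T hT) η) _

end AlmostAntitone

lemma exists_forall_le_of_tendsto {α ι K : Type*} [TopologicalSpace K] [CompactSpace K]
    {F : Filter α} [F.NeBot] {v : α → EReal} {l : EReal} (hv : Tendsto v F (𝓝 l))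
    (E : α → K) {g : ι → K → EReal} {s : Set ι} (hg : ∀ i ∈ s, Continuous (g i))
    (hle : ∀ i ∈ s, ∀ᶠ a in F, v a ≤ g i (E a)) : ∃ u, ∀ i ∈ s, l ≤ g i u := by
  set U := Ultrafilter.of F
  obtain ⟨u, -, hu⟩ := isCompact_univ.ultrafilter_le_nhds (U.map E) (by simp)
  exact ⟨u, fun i hi => le_of_tendsto_of_tendsto (hv.mono_left (Ultrafilter.of_le F))
    (((hg i hi).tendsto u).comp hu) ((hle i hi).filter_mono (Ultrafilter.of_le F))⟩

theorem stmt_1_general {K : Type*} [TopologicalSpace K] [CompactSpace K]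
    [Nonempty K]
    (J : ℝ → K → ℝ)
    (hJc : ∀ t : ℝ, 0 ≤ t → Continuous fun η => J t η)
    (ω : ℝ → ℝ) (hω : Tendsto ω atTop (𝓝 0))
    (hmono : ∀ (η : K) (T t : ℝ), 0 ≤ T → T ≤ t → J t η ≤ J T η + ω T) :
    ∃ (u0 : K) (l : EReal) (Lfun : K → EReal),
      l ≠ ⊤ ∧
      (∀ η : K, Tendsto (fun t => ((J t η : ℝ) : EReal)) atTop (𝓝 (Lfun η))) ∧
      (∀ η : K, Lfun η ≤ l) ∧
      Tendsto (fun t => ((J t u0 : ℝ) : EReal)) atTop (𝓝 l) ∧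
      Tendsto (fun t => (((⨆ η : K, J t η) : ℝ) : EReal)) atTop (𝓝 l) ∧
      (⨆ η : K, Lfun η) = l := by
  have hJ : ∀ η, AlmostAntitone ω (J · η) := hmono
  have hbdd : ∀ t, 0 ≤ t → BddAbove (Set.range (J t)) := fun t ht =>
    (isCompact_range (hJc t ht)).bddAbove
  have hV := AlmostAntitone.ciSup hJ hbdd
  set l := limsup (fun t => ((⨆ η, J t η : ℝ) : EReal)) atTop
  set Lfun := fun η => limsup (fun t => (J t η : EReal)) atTop
  have hLfun η : Tendsto (fun t => (J t η : EReal)) atTop (𝓝 (Lfun η)) :=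
    (hJ η).tendsto_limsup hω
  have hLfun_le η : Lfun η ≤ l := limsup_le_limsup <| (eventually_ge_atTop 0).mono
    fun t ht => EReal.coe_le_coe_iff.2 (le_ciSup (hbdd t ht) η)
  choose E hE using fun n : ℕ => isCompact_univ.exists_isMaxOn Set.univ_nonempty
    (hJc n n.cast_nonneg).continuousOn
  have hVE (n : ℕ) : ⨆ η, J n η ≤ J n (E n) := ciSup_le fun η => (hE n).2 (Set.mem_univ η)
  obtain ⟨u0, hu0⟩ := exists_forall_le_of_tendsto
    ((hV.tendsto_limsup hω).comp tendsto_natCast_atTop_atTop) E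
    (g := fun T η => ((J T η + ω T : ℝ) : EReal)) (s := Set.Ici 0)
    (fun T hT => EReal.continuous_coe_iff.2 ((hJc T hT).add continuous_const))
    (fun T hT => (tendsto_natCast_atTop_atTop.eventually_ge_atTop T).mono fun n hn =>
      EReal.coe_le_coe_iff.2 <| (hVE n).trans (hJ _ T n hT hn))
  have hLu0 : Lfun u0 = l := le_antisymm (hLfun_le u0) <| (hLfun u0).liminf_eq ▸
    EReal.le_liminf_of_le_add_of_tendsto_zero hω ((eventually_ge_atTop 0).mono hu0)
  refine ⟨u0, l, Lfun, hV.limsup_ne_top, hLfun, hLfun_le, hLu0 ▸ hLfun u0,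
    hV.tendsto_limsup hω, le_antisymm (iSup_le hLfun_le) (hLu0 ▸ le_iSup Lfun u0)⟩

/-- Abstract form of Proposition 1(4) of the paper: on a nonempty compact metrizable
space `K`, if `J(t,·)` is continuous for every `t ≥ 0` and
`J(t,η) ≤ J(T,η) + ω(T)` for all `0 ≤ T ≤ t` with `ω(T) → 0`, then there exist a
uniformly overtaking optimal element `u⁰ ∈ K` and `l ∈ EReal`, `l ≠ +∞`, such that
every `J(·,η)` has a limit `Lfun η ≤ l` at infinity, `J(·,u⁰) → l`,
`sup_{η} J(t,η) → l`, and `⨆ η, Lfun η = l`. -/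
theorem stmt_1 {K : Type*} [TopologicalSpace K] [CompactSpace K]
    [TopologicalSpace.MetrizableSpace K] [Nonempty K]
    (J : ℝ → K → ℝ)
    (hJc : ∀ t : ℝ, 0 ≤ t → Continuous fun η => J t η)
    (ω : ℝ → ℝ) (hω : Tendsto ω atTop (𝓝 0))
    (hmono : ∀ (η : K) (T t : ℝ), 0 ≤ T → T ≤ t → J t η ≤ J T η + ω T) :
    ∃ (u0 : K) (l : EReal) (Lfun : K → EReal),
      l ≠ ⊤ ∧
      (∀ η : K, Tendsto (fun t => ((J t η : ℝ) : EReal)) atTop (𝓝 (Lfun η))) ∧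
      (∀ η : K, Lfun η ≤ l) ∧
      Tendsto (fun t => ((J t u0 : ℝ) : EReal)) atTop (𝓝 l) ∧
      Tendsto (fun t => (((⨆ η : K, J t η) : ℝ) : EReal)) atTop (𝓝 l) ∧
      (⨆ η : K, Lfun η) = l :=
  stmt_1_general J hJc ω hω hmono
end

section
/- Let K be a nonempty compact metrizable topological space, let J : [0,∞) × K → ℝ be such that for every t ≥ 0 the function η ↦ J(t,η) is continuous on K, and let ω : [0,∞) → ℝ satisfy ω(T) → 0 as T → ∞ and J(t,η) ≤ J(T,η) + ω(T) for all η ∈ K and all 0 ≤ T ≤ t. Let (t_k) be an unbounded increasing sequence in [0,∞), let η_k ∈ K satisfy J(t_k, η_k) = sup_{η∈K} J(t_k, η) for every k, and suppose η_k → u* in K. Then lim_{t→∞} J(t, u*) exists in the extended reals and equals lim_{t→∞} sup_{η∈K} J(t,η); in particular, u* maximizes η ↦ lim_{t→∞} J(t,η) over K. -/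
open Filter Topology

/-- If `f t ≤ f T + ω T` for all `0 ≤ T ≤ t` and `ω → 0`, then
`limsup ≤ liminf` in `EReal`. -/
lemma limsup_le_liminf_of_cond (f ω : ℝ → ℝ) (hω : Tendsto ω atTop (𝓝 0))
    (h : ∀ T t : ℝ, 0 ≤ T → T ≤ t → f t ≤ f T + ω T) :
    limsup (fun t => ((f t : ℝ) : EReal)) atTop
      ≤ liminf (fun t => ((f t : ℝ) : EReal)) atTop := by
  by_contra hlt
  push_neg at hlt
  obtain ⟨r, hr1, hr2⟩ := EReal.exists_between_coe_real hlt
  obtain ⟨r', hr1', hr2'⟩ := EReal.exists_between_coe_real hr1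
  have hε : (0:ℝ) < r - r' := by
    have := EReal.coe_lt_coe_iff.mp hr2'
    linarith
  have hfreq : ∃ᶠ t in atTop, (r : EReal) < ((f t : ℝ) : EReal) :=
    frequently_lt_of_lt_limsup (by isBoundedDefault) hr2
  have hev : ∀ᶠ T in atTop, (r' : EReal) ≤ ((f T : ℝ) : EReal) := by
    filter_upwards [eventually_ge_atTop (0:ℝ),
      hω.eventually_lt_const hε] with T hT0 hωT
    obtain ⟨t, ht, hTt⟩ := (hfreq.and_eventually (eventually_ge_atTop T)).exists
    have hft : r < f t := EReal.coe_lt_coe_iff.mp ht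
    have := h T t hT0 hTt
    exact EReal.coe_le_coe_iff.mpr (by linarith)
  exact absurd (le_liminf_of_le (by isBoundedDefault) hev) (not_le.mpr hr1')

/-- If `f t ≤ f T + ω T` for all `0 ≤ T ≤ t` and `ω → 0`, then `(f : EReal)`
tends to its `limsup`. -/
lemma tendsto_limsup_of_cond (f ω : ℝ → ℝ) (hω : Tendsto ω atTop (𝓝 0))
    (h : ∀ T t : ℝ, 0 ≤ T → T ≤ t → f t ≤ f T + ω T) :
    Tendsto (fun t => ((f t : ℝ) : EReal)) atTop
      (𝓝 (limsup (fun t => ((f t : ℝ) : EReal)) atTop)) := by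
  refine tendsto_of_liminf_eq_limsup ?_ rfl
  exact le_antisymm (liminf_le_limsup) (limsup_le_liminf_of_cond f ω hω h)

/-- Turnpike-type Remark 2 of the paper: under the abstract Condition (e), if
`η_k` maximizes `J(t_k, ·)` over the compact metrizable space `K` along an unbounded
increasing sequence of horizons `t_k` and `η_k → u*`, then `lim_{t→∞} J(t,u*)` exists
in the extended reals, equals `lim_{t→∞} sup_{η} J(t,η)`, and dominates every
`lim_{t→∞} J(t,η)`; i.e. `u*` maximizes `η ↦ lim_{t→∞} J(t,η)` over `K`. -/
theorem stmt_2 {K : Type*} [TopologicalSpace K] [CompactSpace K]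
    [TopologicalSpace.MetrizableSpace K] [Nonempty K]
    (J : ℝ → K → ℝ)
    (hJc : ∀ t : ℝ, 0 ≤ t → Continuous fun η => J t η)
    (ω : ℝ → ℝ) (hω : Tendsto ω atTop (𝓝 0))
    (hmono : ∀ (η : K) (T t : ℝ), 0 ≤ T → T ≤ t → J t η ≤ J T η + ω T)
    (tk : ℕ → ℝ) (htk0 : ∀ k, 0 ≤ tk k) (htkmono : StrictMono tk)
    (htkTop : Tendsto tk atTop atTop)
    (ηk : ℕ → K) (hmax : ∀ k, J (tk k) (ηk k) = ⨆ η : K, J (tk k) η)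
    (ustar : K) (hconv : Tendsto ηk atTop (𝓝 ustar)) :
    ∃ l : EReal,
      Tendsto (fun t => ((J t ustar : ℝ) : EReal)) atTop (𝓝 l) ∧
      Tendsto (fun t => (((⨆ η : K, J t η) : ℝ) : EReal)) atTop (𝓝 l) ∧
      ∀ η : K, ∃ L : EReal,
        Tendsto (fun t => ((J t η : ℝ) : EReal)) atTop (𝓝 L) ∧ L ≤ l := by
  set S : ℝ → ℝ := fun t => ⨆ η : K, J t η with hS
  have hbdd : ∀ T : ℝ, 0 ≤ T → BddAbove (Set.range fun η => J T η) := fun T hT =>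
    (isCompact_range (hJc T hT)).bddAbove
  have hle : ∀ t : ℝ, 0 ≤ t → ∀ η : K, J t η ≤ S t := fun t ht η =>
    le_ciSup (hbdd t ht) η
  have hScond : ∀ T t : ℝ, 0 ≤ T → T ≤ t → S t ≤ S T + ω T := by
    intro T t hT hTt
    refine ciSup_le fun η => ?_
    calc J t η ≤ J T η + ω T := hmono η T t hT hTt
      _ ≤ S T + ω T := by linarith [hle T hT η]
  set l : EReal := limsup (fun t => ((S t : ℝ) : EReal)) atTop with hl
  have htendS : Tendsto (fun t => ((S t : ℝ) : EReal)) atTop (𝓝 l) :=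
    tendsto_limsup_of_cond S ω hω hScond
  set L : K → EReal := fun η => limsup (fun t => ((J t η : ℝ) : EReal)) atTop with hLdef
  have htendL : ∀ η : K, Tendsto (fun t => ((J t η : ℝ) : EReal)) atTop (𝓝 (L η)) :=
    fun η => tendsto_limsup_of_cond (fun t => J t η) ω hω (fun T t hT hTt => hmono η T t hT hTt)
  have hLle : ∀ η : K, L η ≤ l := by
    intro η
    refine limsup_le_limsup ?_ (by isBoundedDefault) (by isBoundedDefault)
    filter_upwards [eventually_ge_atTop (0:ℝ)] with t ht
    exact EReal.coe_le_coe_iff.mpr (hle t ht η)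
  -- the maximizing sequence: S (tk k) = J (tk k) (ηk k) tends to l
  have htkS : Tendsto (fun k => ((J (tk k) (ηk k) : ℝ) : EReal)) atTop (𝓝 l) := by
    have := htendS.comp htkTop
    convert this using 2 with k
    simp [hS, hmax k]
  -- key: l ≤ L ustar
  have hkey : l ≤ L ustar := by
    by_contra hlt
    push_neg at hlt
    obtain ⟨r, hr1, hr2⟩ := EReal.exists_between_coe_real hlt
    obtain ⟨r', hr1', hr2'⟩ := EReal.exists_between_coe_real hr2
    have hε : (0:ℝ) < r' - r := by
      have := EReal.coe_lt_coe_iff.mp hr1'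
      linarith
    have hev : ∀ᶠ T in atTop, (r : EReal) ≤ ((J T ustar : ℝ) : EReal) := by
      filter_upwards [eventually_ge_atTop (0:ℝ),
        hω.eventually_lt_const hε] with T hT0 hωT
      -- along k, J (tk k) (ηk k) ≤ J T (ηk k) + ω T eventually
      have hJk : Tendsto (fun k => ((J T (ηk k) + ω T : ℝ) : EReal)) atTop
          (𝓝 ((J T ustar + ω T : ℝ) : EReal)) := by
        have h1 : Tendsto (fun k => J T (ηk k)) atTop (𝓝 (J T ustar)) :=
          ((hJc T hT0).tendsto ustar).comp hconv
        exact (continuous_coe_real_ereal.tendsto _).comp (h1.add tendsto_const_nhds)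
      have hlel : l ≤ ((J T ustar + ω T : ℝ) : EReal) := by
        refine le_of_tendsto_of_tendsto htkS hJk ?_
        filter_upwards [htkTop.eventually (eventually_ge_atTop T)] with k hk
        exact EReal.coe_le_coe_iff.mpr (hmono (ηk k) T (tk k) hT0 hk)
      have : (r' : EReal) < ((J T ustar + ω T : ℝ) : EReal) := lt_of_lt_of_le hr2' hlel
      have := EReal.coe_lt_coe_iff.mp this
      exact EReal.coe_le_coe_iff.mpr (by linarith)
    have : (r : EReal) ≤ L ustar := le_liminf_of_le (by isBoundedDefault) hev |>.trans liminf_le_limsup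
    exact absurd this (not_le.mpr hr1)
  have hLeq : L ustar = l := le_antisymm (hLle ustar) hkey
  exact ⟨l, hLeq ▸ htendL ustar, htendS, fun η => ⟨L η, htendL η, hLle η⟩⟩
end

section
/- Let E be a finite-dimensional real inner product space, let L : ℝ → [0,∞) and ρ : ℝ → [0,∞) be continuous, and let a : ℝ × E → E satisfy ‖a(t,y₁) − a(t,y₂)‖ ≤ L(t)·‖y₁ − y₂‖ for all t and all y₁, y₂ ∈ E. Let y : [0,T] → E be differentiable with ‖y'(t) − a(t, y(t))‖ ≤ ρ(t) for all t ∈ [0,T]. Fix τ ∈ [0,T] and let z : [0,τ] → E be differentiable with z'(t) = a(t, z(t)) for all t ∈ [0,τ] and z(τ) = y(τ). Then ‖z(0) − y(0)‖ ≤ exp(2·∫_0^τ L(s) ds) · ∫_0^τ ρ(s) ds. -/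
/-!
Reverse time so that both trajectories start from the common state at `τ`. Their difference
`f` then satisfies `‖f'‖ ≤ L ‖f‖ + ρ`, since `a(t,·)` is `L(t)`-Lipschitz and `y` has defect at
most `ρ`, with `f = 0` at the starting time. Gronwall's inequality with the time-dependent rate `L`
gives `‖z 0 - y 0‖ ≤ exp (∫ L) * ∫ ρ`, which is at most the claimed bound because `∫ L ≥ 0`.
-/

open Filter Topology Set Real

theorem HasDerivWithinAt.comp_const_sub_preimage {𝕜 F : Type*} [NontriviallyNormedField 𝕜]
    [NormedAddCommGroup F] [NormedSpace 𝕜 F] {f : 𝕜 → F} {f' : F} {s : Set 𝕜} {c x : 𝕜}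
    (hf : HasDerivWithinAt f f' s (c - x)) :
    HasDerivWithinAt (fun x => f (c - x)) (-f') ((c - ·) ⁻¹' s) x := by
  simpa [Function.comp_def] using
    hf.scomp x ((hasDerivAt_id x).const_sub c).hasDerivWithinAt (mapsTo_preimage _ s)

/-- Variation of constants: the solution of `u' = L u + g`, `u a = c`. -/
noncomputable def linearODESolution (L g : ℝ → ℝ) (a c t : ℝ) : ℝ :=
  exp (∫ s in a..t, L s) * (c + ∫ s in a..t, exp (-∫ σ in a..s, L σ) * g s)

section linearODESolution

variable {L g : ℝ → ℝ} {a c : ℝ}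

@[simp]
theorem linearODESolution_self : linearODESolution L g a c a = c := by
  simp [linearODESolution]

theorem hasDerivAt_linearODESolution (hL : Continuous L) (hg : Continuous g) (t : ℝ) :
    HasDerivAt (linearODESolution L g a c) (L t * linearODESolution L g a c t + g t) t := by
  have hΦ : ∀ s, HasDerivAt (fun u => ∫ σ in a..u, L σ) (L s) s := fun s =>
    (hL.integral_hasStrictDerivAt a s).hasDerivAt
  have hΦc : Continuous fun u => ∫ σ in a..u, L σ :=
    intervalIntegral.continuous_primitive (fun _ _ => hL.intervalIntegrable _ _) a
  have hψ : Continuous fun s => exp (-∫ σ in a..s, L σ) * g s := (hΦc.neg.rexp).mul hg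
  have hI : HasDerivAt (fun u => c + ∫ s in a..u, exp (-∫ σ in a..s, L σ) * g s)
      (exp (-∫ σ in a..t, L σ) * g t) t :=
    (hψ.integral_hasStrictDerivAt a t).hasDerivAt.const_add c
  refine ((hΦ t).exp.mul hI).congr_deriv ?_
  rw [linearODESolution, mul_left_comm, ← mul_assoc (exp _), ← exp_add, neg_add_cancel, exp_zero,
    one_mul]
  ring

theorem linearODESolution_le {b : ℝ} (hab : a ≤ b) (hL : Continuous L) (hg : Continuous g)
    (hL0 : ∀ t ∈ Icc a b, 0 ≤ L t) (hg0 : ∀ t ∈ Icc a b, 0 ≤ g t) :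
    linearODESolution L g a c b ≤ exp (∫ s in a..b, L s) * (c + ∫ s in a..b, g s) := by
  have hΦc : Continuous fun u => ∫ σ in a..u, L σ :=
    intervalIntegral.continuous_primitive (fun _ _ => hL.intervalIntegrable _ _) a
  have hdamp : ∀ s ∈ Icc a b, exp (-∫ σ in a..s, L σ) * g s ≤ g s := fun s hs =>
    mul_le_of_le_one_left (hg0 s hs) <| exp_le_one_iff.2 <| neg_nonpos.2 <|
      intervalIntegral.integral_nonneg hs.1 fun σ hσ => hL0 σ ⟨hσ.1, hσ.2.trans hs.2⟩
  unfold linearODESolution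
  gcongr
  exact intervalIntegral.integral_mono_on hab (((hΦc.neg.rexp).mul hg).intervalIntegrable _ _)
    (hg.intervalIntegrable _ _) hdamp

end linearODESolution

theorem norm_le_exp_integral_mul_of_norm_deriv_right_le {E : Type*} [NormedAddCommGroup E]
    [NormedSpace ℝ E] {f f' : ℝ → E} {L r : ℝ → ℝ} {a b : ℝ} (hab : a ≤ b)
    (hL : Continuous L) (hr : Continuous r)
    (hL0 : ∀ t ∈ Icc a b, 0 ≤ L t) (hr0 : ∀ t ∈ Icc a b, 0 ≤ r t)
    (hf : ContinuousOn f (Icc a b)) (hf' : ∀ t ∈ Ico a b, HasDerivWithinAt f (f' t) (Ici t) t)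
    (bound : ∀ t ∈ Ico a b, ‖f' t‖ ≤ L t * ‖f t‖ + r t) :
    ‖f b‖ ≤ exp (∫ t in a..b, L t) * (‖f a‖ + ∫ t in a..b, r t) := by
  set K := exp (∫ t in a..b, L t) * (b - a)
  -- Gronwall's inequality by comparison with the solution of `u' = L u + r + ε`, `u a = ‖f a‖`.
  have hε : ∀ ε > 0, ‖f b‖ ≤ exp (∫ t in a..b, L t) * (‖f a‖ + ∫ t in a..b, r t) + K * ε := by
    intro ε hε
    have hrε : Continuous fun t => r t + ε := hr.add continuous_const
    have hcomp := image_norm_le_of_norm_deriv_right_lt_deriv_boundary hf hf'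
      (B := linearODESolution L (fun t => r t + ε) a ‖f a‖) linearODESolution_self.ge
      (hasDerivAt_linearODESolution hL hrε) (fun t ht hft => by rw [← hft]; linarith [bound t ht])
      (right_mem_Icc.2 hab)
    calc ‖f b‖ ≤ linearODESolution L (fun t => r t + ε) a ‖f a‖ b := hcomp
      _ ≤ exp (∫ t in a..b, L t) * (‖f a‖ + ∫ t in a..b, r t + ε) :=
        linearODESolution_le hab hL hrε hL0 fun t ht => by linarith [hr0 t ht]
      _ = _ := by
        rw [intervalIntegral.integral_add (hr.intervalIntegrable _ _) intervalIntegrable_const,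
          intervalIntegral.integral_const, smul_eq_mul]
        ring
  have hlim : Tendsto (fun ε => exp (∫ t in a..b, L t) * (‖f a‖ + ∫ t in a..b, r t) + K * ε)
      (𝓝[>] 0) (𝓝 (exp (∫ t in a..b, L t) * (‖f a‖ + ∫ t in a..b, r t))) := by
    simpa using
      (((tendsto_id (x := 𝓝 (0 : ℝ))).const_mul K).const_add _).mono_left nhdsWithin_le_nhds
  exact ge_of_tendsto hlim (eventually_nhdsWithin_of_forall hε)

theorem norm_sub_apply_le_mul_add {E : Type*} [SeminormedAddGroup E] {A : E → E} {l r : ℝ}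
    {v y z : E} (hA : ∀ y₁ y₂, ‖A y₁ - A y₂‖ ≤ l * ‖y₁ - y₂‖) (hv : ‖v - A y‖ ≤ r) :
    ‖v - A z‖ ≤ l * ‖z - y‖ + r := by
  calc ‖v - A z‖ ≤ ‖v - A y‖ + ‖A y - A z‖ := norm_sub_le_norm_sub_add_norm_sub _ _ _
    _ ≤ r + l * ‖z - y‖ := by
      rw [norm_sub_rev (A y)]
      exact add_le_add hv (hA z y)
    _ = l * ‖z - y‖ + r := add_comm _ _

theorem stmt_6_general {E : Type*} [NormedAddCommGroup E] [InnerProductSpace ℝ E]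
    (L ρ : ℝ → ℝ) (hLc : Continuous L) (hρc : Continuous ρ)
    (hL0 : ∀ t, 0 ≤ L t) (hρ0 : ∀ t, 0 ≤ ρ t)
    (a : ℝ → E → E)
    (hLip : ∀ (t : ℝ) (y₁ y₂ : E), ‖a t y₁ - a t y₂‖ ≤ L t * ‖y₁ - y₂‖)
    (T : ℝ)
    (y : ℝ → E)
    (hy : ∀ t ∈ Set.Icc (0:ℝ) T, ∃ v : E,
      HasDerivWithinAt y v (Set.Icc 0 T) t ∧ ‖v - a t (y t)‖ ≤ ρ t)
    (τ : ℝ) (hτ : τ ∈ Set.Icc (0:ℝ) T)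
    (z : ℝ → E)
    (hz : ∀ t ∈ Set.Icc (0:ℝ) τ,
      HasDerivWithinAt z (a t (z t)) (Set.Icc 0 τ) t)
    (hzτ : z τ = y τ) :
    ‖z 0 - y 0‖ ≤ Real.exp (2 * ∫ s in (0:ℝ)..τ, L s) * ∫ s in (0:ℝ)..τ, ρ s := by
  obtain ⟨hτ0, hτT⟩ := hτ
  choose! v hv hvρ using hy
  have hsub : Icc 0 τ ⊆ Icc 0 T := Icc_subset_Icc_right hτT
  have hrev : ∀ s ∈ Icc 0 τ, τ - s ∈ Icc 0 τ := fun s hs => ⟨by linarith [hs.2], by linarith [hs.1]⟩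
  set f : ℝ → E := fun s => z (τ - s) - y (τ - s)
  set f' : ℝ → E := fun s => v (τ - s) - a (τ - s) (z (τ - s))
  have hf : ∀ s ∈ Icc 0 τ, HasDerivWithinAt f (f' s) (Icc 0 τ) s := fun s hs => by
    have h := ((hz _ (hrev s hs)).sub ((hv _ (hsub (hrev s hs))).mono hsub)).comp_const_sub_preimage
    simpa [preimage_const_sub_Icc, f', neg_sub] using h
  have hbound : ∀ s ∈ Ico 0 τ, ‖f' s‖ ≤ L (τ - s) * ‖f s‖ + ρ (τ - s) := fun s hs =>
    norm_sub_apply_le_mul_add (hLip _) (hvρ _ (hsub (hrev s (Ico_subset_Icc_self hs))))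
  have hgron := norm_le_exp_integral_mul_of_norm_deriv_right_le hτ0
    (hLc.comp (continuous_sub_left τ)) (hρc.comp (continuous_sub_left τ))
    (fun _ _ => hL0 _) (fun _ _ => hρ0 _) (fun s hs => (hf s hs).continuousWithinAt)
    (fun s hs => (hf s (Ico_subset_Icc_self hs)).mono_of_mem_nhdsWithin (Icc_mem_nhdsGE_of_mem hs))
    hbound
  simp only [f, sub_zero, sub_self, hzτ, norm_zero, zero_add, Function.comp_def,
    intervalIntegral.integral_comp_sub_left] at hgron
  calc ‖z 0 - y 0‖ ≤ exp (∫ s in (0:ℝ)..τ, L s) * ∫ s in (0:ℝ)..τ, ρ s := hgron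
    _ ≤ exp (2 * ∫ s in (0:ℝ)..τ, L s) * ∫ s in (0:ℝ)..τ, ρ s := by
      have hΛ : 0 ≤ ∫ s in (0:ℝ)..τ, L s := intervalIntegral.integral_nonneg hτ0 fun s _ => hL0 s
      gcongr
      · exact intervalIntegral.integral_nonneg hτ0 fun s _ => hρ0 s
      · linarith

/-- Finite-dimensional core of Proposition 3 ('dop') of the paper: if `y` is a
`ρ`-approximate solution of `y' = a(t,y)` on `[0,T]` with `a(t,·)` being
`L(t)`-Lipschitz, and `z` is the exact solution on `[0,τ]` with `z(τ) = y(τ)`, then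
`‖z(0) − y(0)‖ ≤ exp(2∫_0^τ L) · ∫_0^τ ρ`. -/
theorem stmt_6 {E : Type*} [NormedAddCommGroup E] [InnerProductSpace ℝ E]
    [FiniteDimensional ℝ E]
    (L ρ : ℝ → ℝ) (hLc : Continuous L) (hρc : Continuous ρ)
    (hL0 : ∀ t, 0 ≤ L t) (hρ0 : ∀ t, 0 ≤ ρ t)
    (a : ℝ → E → E)
    (hLip : ∀ (t : ℝ) (y₁ y₂ : E), ‖a t y₁ - a t y₂‖ ≤ L t * ‖y₁ - y₂‖)
    (T : ℝ) (hT : 0 ≤ T)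
    (y : ℝ → E)
    (hy : ∀ t ∈ Set.Icc (0:ℝ) T, ∃ v : E,
      HasDerivWithinAt y v (Set.Icc 0 T) t ∧ ‖v - a t (y t)‖ ≤ ρ t)
    (τ : ℝ) (hτ : τ ∈ Set.Icc (0:ℝ) T)
    (z : ℝ → E)
    (hz : ∀ t ∈ Set.Icc (0:ℝ) τ,
      HasDerivWithinAt z (a t (z t)) (Set.Icc 0 τ) t)
    (hzτ : z τ = y τ) :
    ‖z 0 - y 0‖ ≤ Real.exp (2 * ∫ s in (0:ℝ)..τ, L s) * ∫ s in (0:ℝ)..τ, ρ s :=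
  stmt_6_general L ρ hLc hρc hL0 hρ0 a hLip T y hy τ hτ z hz hzτ
end

section
/- Let m ∈ ℕ, λ ∈ ℝ, let F : [0,∞) → (m × m real matrices) and g : [0,∞) → ℝ^m (row vectors) be continuous, let A : [0,∞) → (m × m real matrices) be differentiable with A'(t) = F(t)·A(t) and A(0) = 1, and let ψ : [0,∞) → ℝ^m be differentiable with ψ'(t) = −ψ(t)·F(t) − λ·g(t) for all t ≥ 0. Suppose there is an unbounded increasing sequence (τ_n) in [0,∞) and a vector I_* ∈ ℝ^m such that ∫_0^{τ_n} g(t)·A(t) dt → I_* and ‖ψ(τ_n)·A(τ_n)‖ → 0 as n → ∞. Then ψ(0) = λ·I_*, and for every T ≥ 0: ψ(T)·A(T) = λ·(I_* − ∫_0^T g(t)·A(t) dt). -/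
/-!
Pairing the adjoint equation with the linearized one, the `F`-terms cancel, so
`d/dt (ψ(t)·A(t)) = -λ·g(t)·A(t)` and hence `ψ(T)·A(T) + λ ∫_0^T g·A = ψ(0)` for all `T ≥ 0`.
Evaluating this conserved quantity at `τ_n` and passing to the limit gives `ψ(0) = λ·I_*`.
-/

open Filter Topology Matrix Set

theorem ContinuousOn.matrix_vecMul {X ι κ R : Type*} [TopologicalSpace X] [TopologicalSpace R]
    [NonUnitalNonAssocSemiring R] [ContinuousAdd R] [ContinuousMul R] [Fintype ι]
    {s : Set X} {v : X → ι → R} {A : X → Matrix ι κ R}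
    (hv : ContinuousOn v s) (hA : ContinuousOn A s) :
    ContinuousOn (fun x => v x ᵥ* A x) s := by
  rw [continuousOn_iff_continuous_domRestrict] at *
  exact hv.matrix_vecMul hA

theorem HasDerivWithinAt.matrix_vecMul {𝕜 ι κ : Type*} [NontriviallyNormedField 𝕜] [Fintype ι]
    {s : Set 𝕜} {t : 𝕜} {v : 𝕜 → ι → 𝕜} {v' : ι → 𝕜} {A : 𝕜 → Matrix ι κ 𝕜} {A' : Matrix ι κ 𝕜}
    (hv : HasDerivWithinAt v v' s t)
    (hA : ∀ i j, HasDerivWithinAt (fun x => A x i j) (A' i j) s t) :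
    HasDerivWithinAt (fun x => v x ᵥ* A x) (v' ᵥ* A t + v t ᵥ* A') s t := by
  refine hasDerivWithinAt_pi.2 fun j => ?_
  simp only [vecMul, dotProduct, Pi.add_apply, ← Finset.sum_add_distrib]
  exact HasDerivWithinAt.fun_sum fun i _ => (hasDerivWithinAt_pi.1 hv i).mul (hA i j)

theorem hasDerivWithinAt_adjoint_vecMul_fundamental {ι : Type*} [Fintype ι] {s : Set ℝ} {t lam : ℝ}
    {F A : ℝ → Matrix ι ι ℝ} {ψ g : ℝ → ι → ℝ}
    (hA : ∀ i j, HasDerivWithinAt (fun x => A x i j) ((F t * A t) i j) s t)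
    (hψ : HasDerivWithinAt ψ (-(ψ t ᵥ* F t) - lam • g t) s t) :
    HasDerivWithinAt (fun x => ψ x ᵥ* A x) (-(lam • g t ᵥ* A t)) s t := by
  convert hψ.matrix_vecMul hA using 1
  rw [sub_vecMul, neg_vecMul, smul_vecMul, vecMul_vecMul]
  abel

theorem adjoint_vecMul_fundamental_eq_sub_integral {ι : Type*} [Fintype ι] {lam T : ℝ}
    {F A : ℝ → Matrix ι ι ℝ} {ψ g : ℝ → ι → ℝ}
    (hgc : ContinuousOn g (Ici 0))
    (hA : ∀ t ≥ (0:ℝ), ∀ i j, HasDerivWithinAt (fun x => A x i j) ((F t * A t) i j) (Ici 0) t)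
    (hψ : ∀ t ≥ (0:ℝ), HasDerivWithinAt ψ (-(ψ t ᵥ* F t) - lam • g t) (Ici 0) t)
    (hT : 0 ≤ T) :
    ψ T ᵥ* A T = ψ 0 ᵥ* A 0 - lam • ∫ t in (0:ℝ)..T, g t ᵥ* A t := by
  have hderiv : ∀ t ≥ (0:ℝ),
      HasDerivWithinAt (fun x => ψ x ᵥ* A x) (-(lam • g t ᵥ* A t)) (Ici 0) t :=
    fun t ht => hasDerivWithinAt_adjoint_vecMul_fundamental (hA t ht) (hψ t ht)
  have hAc : ContinuousOn A (Ici 0) := fun t ht => continuousWithinAt_pi.2 fun i =>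
    continuousWithinAt_pi.2 fun j => (hA t ht i j).continuousWithinAt
  have hIcc : Icc 0 T ⊆ Ici 0 := Icc_subset_Ici_self
  have hint : IntervalIntegrable (fun t => -(lam • g t ᵥ* A t)) MeasureTheory.volume 0 T := by
    refine ContinuousOn.intervalIntegrable ?_
    rw [uIcc_of_le hT]
    exact ((hgc.mono hIcc).matrix_vecMul (hAc.mono hIcc)).const_smul lam |>.neg
  have hFTC := intervalIntegral.integral_eq_sub_of_hasDeriv_right_of_le hT
    (fun t ht => (hderiv t ht.1).continuousWithinAt.mono hIcc)
    (fun t ht => (hderiv t ht.1.le).mono fun x hx => le_of_lt (ht.1.trans hx)) hint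
  rw [intervalIntegral.integral_neg, intervalIntegral.integral_smul, neg_eq_iff_eq_neg] at hFTC
  rw [hFTC, neg_sub, sub_sub_cancel]

theorem stmt_9_general (m : ℕ) (lam : ℝ)
    (F : ℝ → Matrix (Fin m) (Fin m) ℝ) (g : ℝ → Fin m → ℝ)
    (hgc : ∀ i, ContinuousOn (fun t => g t i) (Set.Ici 0))
    (A : ℝ → Matrix (Fin m) (Fin m) ℝ)
    (hA : ∀ t ≥ (0:ℝ), ∀ i j,
      HasDerivWithinAt (fun s => A s i j) ((F t * A t) i j) (Set.Ici 0) t)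
    (hA0 : A 0 = 1)
    (ψ : ℝ → Fin m → ℝ)
    (hψ : ∀ t ≥ (0:ℝ),
      HasDerivWithinAt ψ (-(Matrix.vecMul (ψ t) (F t)) - lam • g t) (Set.Ici 0) t)
    (τ : ℕ → ℝ) (hτ0 : ∀ n, 0 ≤ τ n)
    (Istar : Fin m → ℝ)
    (hI : Tendsto (fun n => ∫ t in (0:ℝ)..τ n, Matrix.vecMul (g t) (A t))
      atTop (𝓝 Istar))
    (hψA : Tendsto (fun n => ‖Matrix.vecMul (ψ (τ n)) (A (τ n))‖) atTop (𝓝 0)) :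
    ψ 0 = lam • Istar ∧
    ∀ T ≥ (0:ℝ),
      Matrix.vecMul (ψ T) (A T)
        = lam • (Istar - ∫ t in (0:ℝ)..T, Matrix.vecMul (g t) (A t)) := by
  have hcauchy : ∀ T ≥ (0:ℝ), ψ T ᵥ* A T = ψ 0 - lam • ∫ t in (0:ℝ)..T, g t ᵥ* A t := by
    intro T hT
    simpa [hA0] using adjoint_vecMul_fundamental_eq_sub_integral (continuousOn_pi.2 hgc) hA hψ hT
  have hψ0 : ψ 0 = lam • Istar := by
    have hlim : Tendsto (fun n => ψ (τ n) ᵥ* A (τ n) + lam • ∫ t in (0:ℝ)..τ n, g t ᵥ* A t)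
        atTop (𝓝 (0 + lam • Istar)) :=
      (tendsto_zero_iff_norm_tendsto_zero.2 hψA).add (hI.const_smul lam)
    refine tendsto_nhds_unique (tendsto_const_nhds.congr fun n => ?_)
      (zero_add (lam • Istar) ▸ hlim)
    rw [hcauchy _ (hτ0 n), sub_add_cancel]
  refine ⟨hψ0, fun T hT => ?_⟩
  rw [hcauchy T hT, hψ0, smul_sub]

/-- Core computation of Proposition 6 ('aff') of the paper: if along an unbounded
increasing sequence of times `τ_n` one has `∫_0^{τ_n} g·A → I_*` and
`‖ψ(τ_n)·A(τ_n)‖ → 0`, then the adjoint variable satisfies the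
Aseev–Kryazhimskii Cauchy-type formula: `ψ(0) = λ·I_*` and
`ψ(T)·A(T) = λ·(I_* − ∫_0^T g·A)` for every `T ≥ 0`. -/
theorem stmt_9 (m : ℕ) (lam : ℝ)
    (F : ℝ → Matrix (Fin m) (Fin m) ℝ) (g : ℝ → Fin m → ℝ)
    (hFc : ∀ i j, ContinuousOn (fun t => F t i j) (Set.Ici 0))
    (hgc : ∀ i, ContinuousOn (fun t => g t i) (Set.Ici 0))
    (A : ℝ → Matrix (Fin m) (Fin m) ℝ)
    (hA : ∀ t ≥ (0:ℝ), ∀ i j,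
      HasDerivWithinAt (fun s => A s i j) ((F t * A t) i j) (Set.Ici 0) t)
    (hA0 : A 0 = 1)
    (ψ : ℝ → Fin m → ℝ)
    (hψ : ∀ t ≥ (0:ℝ),
      HasDerivWithinAt ψ (-(Matrix.vecMul (ψ t) (F t)) - lam • g t) (Set.Ici 0) t)
    (τ : ℕ → ℝ) (hτ0 : ∀ n, 0 ≤ τ n) (hτmono : StrictMono τ)
    (hτTop : Tendsto τ atTop atTop)
    (Istar : Fin m → ℝ)
    (hI : Tendsto (fun n => ∫ t in (0:ℝ)..τ n, Matrix.vecMul (g t) (A t))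
      atTop (𝓝 Istar))
    (hψA : Tendsto (fun n => ‖Matrix.vecMul (ψ (τ n)) (A (τ n))‖) atTop (𝓝 0)) :
    ψ 0 = lam • Istar ∧
    ∀ T ≥ (0:ℝ),
      Matrix.vecMul (ψ T) (A T)
        = lam • (Istar - ∫ t in (0:ℝ)..T, Matrix.vecMul (g t) (A t)) :=
  stmt_9_general m lam F g hgc A hA hA0 ψ hψ τ hτ0 Istar hI hψA
end

section
/- Let m ∈ ℕ, λ ∈ ℝ, let F : [0,∞) → (m × m real matrices) and g : [0,∞) → ℝ^m (row vectors) be continuous, and let A : [0,∞) → (m × m real matrices) be differentiable with A'(t) = F(t)·A(t) and A(0) = 1. Suppose ψ₁, ψ₂ : [0,∞) → ℝ^m are both differentiable and both satisfy ψᵢ'(t) = −ψᵢ(t)·F(t) − λ·g(t) for all t ≥ 0, and both satisfy lim_{t→∞} ψᵢ(t)·A(t) = 0. Then ψ₁ = ψ₂. -/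
/-!
For two solutions of the adjoint equation the difference `φ = ψ₁ - ψ₂` solves the homogeneous
equation `φ' = -φF`, so `(φA)' = -φFA + φFA = 0` and `φA` is constant; by transversality the
constant is `0`, hence `φ(0) = φ(0)A(0) = 0`. Uniqueness for the linear equation `φ' = -φF`
(Grönwall, with `F` bounded on compact intervals) then gives `φ ≡ 0`.
-/

open Filter Topology Set

section LinearODE

variable {E : Type*} [NormedAddCommGroup E] [NormedSpace ℝ E]

theorem eq_zero_of_hasDerivWithinAt_clm_apply_Ici {L : ℝ → E →L[ℝ] E} {φ : ℝ → E} {a : ℝ}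
    (hL : ContinuousOn L (Ici a))
    (hφ : ∀ t ≥ a, HasDerivWithinAt φ (L t (φ t)) (Ici a) t) (ha : φ a = 0) :
    ∀ t ≥ a, φ t = 0 := by
  intro t ht
  obtain ⟨C, hC⟩ :=
    isCompact_Icc.exists_bound_of_continuousOn (hL.mono (Icc_subset_Ici_self : Icc a t ⊆ _))
  refine eq_zero_of_abs_deriv_le_mul_abs_self_of_eq_zero_right (K := C)
    (fun s hs => (hφ s hs.1).continuousWithinAt.mono Icc_subset_Ici_self)
    (fun s hs => (hφ s hs.1).mono (Ici_subset_Ici.2 hs.1)) ha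
    (fun s hs => ?_) t ⟨ht, le_rfl⟩
  exact (L s).le_of_opNorm_le (hC s (Ico_subset_Icc_self hs)) _

theorem eq_of_hasDerivWithinAt_zero_Ici {f : ℝ → E} {a : ℝ}
    (hf : ∀ t ≥ a, HasDerivWithinAt f 0 (Ici a) t) : ∀ t ≥ a, f t = f a := fun t ht =>
  constant_of_has_deriv_right_zero
    (fun s hs => (hf s hs.1).continuousWithinAt.mono Icc_subset_Ici_self)
    (fun s hs => (hf s hs.1).mono (Ici_subset_Ici.2 hs.1)) t ⟨ht, le_rfl⟩

end LinearODE

namespace Matrix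

variable {n : Type*} [Fintype n]

theorem hasDerivWithinAt_vecMul {φ : ℝ → n → ℝ} {φ' : n → ℝ} {A : ℝ → Matrix n n ℝ}
    {A' : Matrix n n ℝ} {s : Set ℝ} {t : ℝ} (hφ : HasDerivWithinAt φ φ' s t)
    (hA : ∀ i j, HasDerivWithinAt (fun u => A u i j) (A' i j) s t) :
    HasDerivWithinAt (fun u => φ u ᵥ* A u) (φ' ᵥ* A t + φ t ᵥ* A') s t := by
  refine hasDerivWithinAt_pi.2 fun j => ?_
  have := HasDerivWithinAt.fun_sum (u := Finset.univ) fun i _ =>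
    (hasDerivWithinAt_pi.1 hφ i).mul (hA i j)
  simpa only [vecMul, dotProduct, Pi.add_apply, Pi.mul_apply, Finset.sum_add_distrib] using this

theorem vecMul_eq_of_hasDerivWithinAt_adjoint {F A : ℝ → Matrix n n ℝ} {φ : ℝ → n → ℝ} {a : ℝ}
    (hA : ∀ t ≥ a, ∀ i j, HasDerivWithinAt (fun s => A s i j) ((F t * A t) i j) (Ici a) t)
    (hφ : ∀ t ≥ a, HasDerivWithinAt φ (-(φ t ᵥ* F t)) (Ici a) t) :
    ∀ t ≥ a, φ t ᵥ* A t = φ a ᵥ* A a :=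
  eq_of_hasDerivWithinAt_zero_Ici fun t ht => by
    simpa only [neg_vecMul, vecMul_vecMul, neg_add_cancel] using
      hasDerivWithinAt_vecMul (hφ t ht) (hA t ht)

theorem eq_zero_of_hasDerivWithinAt_adjoint {F : ℝ → Matrix n n ℝ} {φ : ℝ → n → ℝ} {a : ℝ}
    (hF : ∀ i j, ContinuousOn (fun t => F t i j) (Ici a))
    (hφ : ∀ t ≥ a, HasDerivWithinAt φ (-(φ t ᵥ* F t)) (Ici a) t) (ha : φ a = 0) :
    ∀ t ≥ a, φ t = 0 := by
  have hF' : ContinuousOn F (Ici a) := continuousOn_pi.2 fun i => continuousOn_pi.2 (hF i)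
  refine eq_zero_of_hasDerivWithinAt_clm_apply_Ici
    (L := fun t => -(F t).vecMulLinear.toContinuousLinearMap) ?_ hφ ha
  refine continuousOn_clm_apply.2 fun x => ?_
  exact ((continuous_const.matrix_vecMul continuous_id).comp_continuousOn hF').neg

end Matrix

theorem stmt_10_general (m : ℕ) (lam : ℝ)
    (F : ℝ → Matrix (Fin m) (Fin m) ℝ) (g : ℝ → Fin m → ℝ)
    (hFc : ∀ i j, ContinuousOn (fun t => F t i j) (Set.Ici 0))
    (A : ℝ → Matrix (Fin m) (Fin m) ℝ)
    (hA : ∀ t ≥ (0:ℝ), ∀ i j,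
      HasDerivWithinAt (fun s => A s i j) ((F t * A t) i j) (Set.Ici 0) t)
    (hA0 : A 0 = 1)
    (ψ₁ ψ₂ : ℝ → Fin m → ℝ)
    (hψ₁ : ∀ t ≥ (0:ℝ),
      HasDerivWithinAt ψ₁ (-(Matrix.vecMul (ψ₁ t) (F t)) - lam • g t) (Set.Ici 0) t)
    (hψ₂ : ∀ t ≥ (0:ℝ),
      HasDerivWithinAt ψ₂ (-(Matrix.vecMul (ψ₂ t) (F t)) - lam • g t) (Set.Ici 0) t)
    (hlim₁ : Tendsto (fun t => Matrix.vecMul (ψ₁ t) (A t)) atTop (𝓝 0))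
    (hlim₂ : Tendsto (fun t => Matrix.vecMul (ψ₂ t) (A t)) atTop (𝓝 0)) :
    ∀ t ≥ (0:ℝ), ψ₁ t = ψ₂ t := by
  have hφ : ∀ t ≥ (0:ℝ),
      HasDerivWithinAt (ψ₁ - ψ₂) (-Matrix.vecMul ((ψ₁ - ψ₂) t) (F t)) (Ici 0) t :=
    fun t ht => ((hψ₁ t ht).sub (hψ₂ t ht)).congr_deriv <| by
      rw [Pi.sub_apply, Matrix.sub_vecMul]; abel
  have hlim : Tendsto (fun t => Matrix.vecMul ((ψ₁ - ψ₂) t) (A t)) atTop (𝓝 0) := by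
    simpa only [Pi.sub_apply, Matrix.sub_vecMul, sub_zero] using hlim₁.sub hlim₂
  have hconst := Matrix.vecMul_eq_of_hasDerivWithinAt_adjoint hA hφ
  have h0 : (ψ₁ - ψ₂) 0 = 0 := by
    rw [← Matrix.vecMul_one ((ψ₁ - ψ₂) 0), ← hA0]
    refine tendsto_nhds_unique (tendsto_const_nhds.congr' ?_) hlim
    filter_upwards [eventually_ge_atTop 0] with t ht using (hconst t ht).symm
  intro t ht
  exact sub_eq_zero.1 (Matrix.eq_zero_of_hasDerivWithinAt_adjoint hFc hφ h0 t ht)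

/-- Uniqueness assertion of Theorem 2 ('aff_') of the paper: at most one solution
of the adjoint equation `ψ' = −ψF − λg` satisfies the transversality condition
`lim_{t→∞} ψ(t)·A(t) = 0`, where `A` is the fundamental matrix of `x' = F(t)x`. -/
theorem stmt_10 (m : ℕ) (lam : ℝ)
    (F : ℝ → Matrix (Fin m) (Fin m) ℝ) (g : ℝ → Fin m → ℝ)
    (hFc : ∀ i j, ContinuousOn (fun t => F t i j) (Set.Ici 0))
    (hgc : ∀ i, ContinuousOn (fun t => g t i) (Set.Ici 0))
    (A : ℝ → Matrix (Fin m) (Fin m) ℝ)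
    (hA : ∀ t ≥ (0:ℝ), ∀ i j,
      HasDerivWithinAt (fun s => A s i j) ((F t * A t) i j) (Set.Ici 0) t)
    (hA0 : A 0 = 1)
    (ψ₁ ψ₂ : ℝ → Fin m → ℝ)
    (hψ₁ : ∀ t ≥ (0:ℝ),
      HasDerivWithinAt ψ₁ (-(Matrix.vecMul (ψ₁ t) (F t)) - lam • g t) (Set.Ici 0) t)
    (hψ₂ : ∀ t ≥ (0:ℝ),
      HasDerivWithinAt ψ₂ (-(Matrix.vecMul (ψ₂ t) (F t)) - lam • g t) (Set.Ici 0) t)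
    (hlim₁ : Tendsto (fun t => Matrix.vecMul (ψ₁ t) (A t)) atTop (𝓝 0))
    (hlim₂ : Tendsto (fun t => Matrix.vecMul (ψ₂ t) (A t)) atTop (𝓝 0)) :
    ∀ t ≥ (0:ℝ), ψ₁ t = ψ₂ t :=
  stmt_10_general m lam F g hFc A hA hA0 ψ₁ ψ₂ hψ₁ hψ₂ hlim₁ hlim₂
end

section
/- Let m ∈ ℕ, T₀ ∈ ℝ, and let N : [T₀,∞) → (m × m real matrices) be continuous with every entry of N(t) nonnegative for every t ≥ T₀. Let P : [T₀,∞) → (m × m real matrices) be differentiable with P'(t) = N(t)·P(t) for all t ≥ T₀ and P(T₀) = 1. Then every entry of P(t) is nonnegative for every t ≥ T₀. -/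
/-!
Perturb each column `x` of `P` to `x + ε e^{(K+1)(t-T₀)}`, where `K` bounds the row sums of `N`
on `[T₀, t]`. At the first time a coordinate of the perturbed vector vanishes, all coordinates are
`≥ 0`, so `x ≥ -ε e^{…}` and `(N x)_i ≥ -K ε e^{…}`; the derivative of the vanishing coordinate is
then at least `ε e^{…} > 0`, which is impossible at a first zero. Hence the perturbed vector stays
positive, and `ε → 0` gives `x ≥ 0`.
-/

open Set Matrix

theorem HasDerivWithinAt.nonpos_of_isMinOn_Icc {f : ℝ → ℝ} {f' a b : ℝ} (hab : a < b)
    (hf : HasDerivWithinAt f f' (Icc a b) b) (hmin : IsMinOn f (Icc a b) b) : f' ≤ 0 := by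
  have h := hmin.localize.hasFDerivWithinAt_nonneg hf.hasFDerivWithinAt
    (sub_mem_posTangentConeAt_of_segment_subset (segment_symm ℝ b a ▸ segment_subset_Icc hab.le))
  rw [ContinuousLinearMap.toSpanSingleton_apply, smul_eq_mul] at h
  nlinarith

theorem pos_on_Icc_of_deriv_pos_at_zero {ι : Type*} [Finite ι] {f f' : ι → ℝ → ℝ} {a b : ℝ}
    (hf : ∀ t ∈ Icc a b, ∀ i, HasDerivWithinAt (f i) (f' i t) (Icc a b) t)
    (ha : ∀ i, 0 < f i a)
    (hzero : ∀ t ∈ Ioc a b, ∀ i, (∀ k, 0 ≤ f k t) → f i t = 0 → 0 < f' i t) :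
    ∀ t ∈ Icc a b, ∀ i, 0 < f i t := by
  have hcont : ∀ i, ContinuousOn (f i) (Icc a b) := fun i t ht => (hf t ht i).continuousWithinAt
  by_contra! hneg
  set S := ⋃ i, Icc a b ∩ f i ⁻¹' Iic 0 with hS
  have hmemS : ∀ {t}, t ∈ S ↔ t ∈ Icc a b ∧ ∃ i, f i t ≤ 0 := by simp [hS]
  have hSc : IsCompact S :=
    isCompact_Icc.of_isClosed_subset
      (isClosed_iUnion_of_finite fun i => (hcont i).preimage_isClosed_of_isClosed isClosed_Icc
        isClosed_Iic)
      (iUnion_subset fun i => inter_subset_left)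
  obtain ⟨t, ht, i, hi⟩ := hneg
  obtain ⟨τ, hτS, hτmin⟩ := hSc.exists_isLeast ⟨t, hmemS.2 ⟨ht, i, hi⟩⟩
  obtain ⟨hτab, j, hj⟩ := hmemS.1 hτS
  have haτ : a < τ := hτab.1.lt_of_ne fun h => (ha j).not_ge (h ▸ hj)
  have hsub : Icc a τ ⊆ Icc a b := Icc_subset_Icc_right hτab.2
  have hfirst : ∀ k, ∀ s ∈ Icc a τ, f k s ≤ 0 → s = τ := fun k s hs hks =>
    le_antisymm hs.2 (hτmin (hmemS.2 ⟨hsub hs, k, hks⟩))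
  have hτnonneg : ∀ k, 0 ≤ f k τ := by
    intro k
    by_contra! hk
    obtain ⟨s, hs, hks⟩ := intermediate_value_Icc' haτ.le ((hcont k).mono hsub)
      ⟨hk.le, (ha k).le⟩
    exact hk.ne (hfirst k s hs hks.le ▸ hks)
  have hjτ : f j τ = 0 := le_antisymm hj (hτnonneg j)
  have hmin : IsMinOn (f j) (Icc a τ) τ := fun s hs =>
    show f j τ ≤ f j s from hjτ ▸ not_lt.1 fun hjs => (hfirst j s hs hjs.le ▸ hjs).ne hjτ
  exact (hzero τ ⟨haτ, hτab.2⟩ j hτnonneg hjτ).not_ge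
    (((hf τ hτab j).mono hsub).nonpos_of_isMinOn_Icc haτ hmin)

theorem nonneg_of_hasDerivWithinAt_mulVec_of_nonneg {ι : Type*} [Fintype ι]
    {N : ℝ → Matrix ι ι ℝ} {x : ℝ → ι → ℝ} {a b K : ℝ}
    (hN : ∀ t ∈ Icc a b, ∀ i k, 0 ≤ N t i k) (hK : ∀ t ∈ Icc a b, ∀ i, ∑ k, N t i k ≤ K)
    (hx : ∀ t ∈ Icc a b, ∀ i, HasDerivWithinAt (fun s => x s i) ((N t *ᵥ x t) i) (Icc a b) t)
    (ha : ∀ i, 0 ≤ x a i) :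
    ∀ t ∈ Icc a b, ∀ i, 0 ≤ x t i := by
  set e : ℝ → ℝ := fun t => Real.exp ((K + 1) * (t - a)) with he
  have he' : ∀ t, HasDerivAt e (e t * (K + 1)) t := fun t => by
    simpa using (((hasDerivAt_id t).sub_const a).const_mul (K + 1)).exp
  have hpert : ∀ ε > 0, ∀ t ∈ Icc a b, ∀ i, 0 < x t i + ε * e t := by
    intro ε hε
    refine pos_on_Icc_of_deriv_pos_at_zero (f := fun i t => x t i + ε * e t)
      (f' := fun i t => (N t *ᵥ x t) i + ε * (e t * (K + 1)))
      (fun t ht i => (hx t ht i).add ((he' t).hasDerivWithinAt.const_mul ε))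
      (fun i => by simpa [he] using (ha i).trans_lt (lt_add_of_pos_right _ hε)) ?_
    intro t ht i hnonneg _
    have het : 0 < e t := Real.exp_pos _
    have hNx : -(ε * e t * K) ≤ (N t *ᵥ x t) i :=
      calc -(ε * e t * K) ≤ ∑ k, N t i k * -(ε * e t) := by
            rw [← Finset.sum_mul]
            nlinarith [hK t (Ioc_subset_Icc_self ht) i, mul_pos hε het]
        _ ≤ (N t *ᵥ x t) i :=
            Finset.sum_le_sum fun k _ => mul_le_mul_of_nonneg_left
              (by linarith [hnonneg k]) (hN t (Ioc_subset_Icc_self ht) i k)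
    nlinarith [mul_pos hε het]
  intro t ht i
  refine le_of_forall_pos_lt_add fun δ hδ => ?_
  have het : 0 < e t := Real.exp_pos _
  simpa [div_mul_cancel₀ δ het.ne'] using hpert (δ / e t) (div_pos hδ het) t ht i

theorem IsCompact.exists_forall_sum_le {X ι κ : Type*} [TopologicalSpace X] [Finite ι]
    [Fintype κ] {s : Set X} (hs : IsCompact s) {N : X → ι → κ → ℝ}
    (hN : ∀ i k, ContinuousOn (fun t => N t i k) s) :
    ∃ K, ∀ t ∈ s, ∀ i, ∑ k, N t i k ≤ K := by
  have hrow : ∀ i, BddAbove ((fun t => ∑ k, N t i k) '' s) := fun i =>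
    hs.bddAbove_image (continuousOn_finsetSum _ fun k _ => hN i k)
  choose K hK using hrow
  obtain ⟨L, hL⟩ := Finite.bddAbove_range K
  exact ⟨L, fun t ht i => (hK i (mem_image_of_mem _ ht)).trans (hL (mem_range_self i))⟩

/-- Positivity of the fundamental matrix (used in Proposition 8 ('mon') of the
paper): if `N(t)` is entrywise nonnegative for `t ≥ T₀` and `P' = N·P`,
`P(T₀) = 1`, then `P(t)` is entrywise nonnegative for every `t ≥ T₀`. -/
theorem stmt_13 (m : ℕ) (T₀ : ℝ)
    (N : ℝ → Matrix (Fin m) (Fin m) ℝ)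
    (hNc : ∀ i j, ContinuousOn (fun t => N t i j) (Set.Ici T₀))
    (hN0 : ∀ t ≥ T₀, ∀ i j, 0 ≤ N t i j)
    (P : ℝ → Matrix (Fin m) (Fin m) ℝ)
    (hP : ∀ t ≥ T₀, ∀ i j,
      HasDerivWithinAt (fun s => P s i j) ((N t * P t) i j) (Set.Ici T₀) t)
    (hP0 : P T₀ = 1) :
    ∀ t ≥ T₀, ∀ i j, 0 ≤ P t i j := by
  intro t ht i j
  have hsub : Icc T₀ t ⊆ Ici T₀ := Icc_subset_Ici_self
  obtain ⟨K, hK⟩ := isCompact_Icc.exists_forall_sum_le fun i k => (hNc i k).mono hsub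
  refine nonneg_of_hasDerivWithinAt_mulVec_of_nonneg (x := fun s k => P s k j)
    (fun s hs => hN0 s hs.1) hK
    (fun s hs k => (hP s hs.1 k j).mono hsub) (fun k => ?_) t ⟨ht, le_rfl⟩ i
  rw [hP0, one_apply]
  split_ifs <;> norm_num
end

section
/- Let m ∈ ℕ, T₀ ∈ ℝ, and let N : [T₀,∞) → (m × m real matrices) be continuous with every entry of N(t) strictly positive for every t ≥ T₀. Let P : [T₀,∞) → (m × m real matrices) be differentiable with P'(t) = N(t)·P(t) for all t ≥ T₀ and P(T₀) = 1. Then every entry of P(t) is strictly positive for every t > T₀. -/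
/-!
Every entry of `P` has right derivative `N(T₀)ᵢⱼ > 0` at `T₀`, so `P` is entrywise positive
just after `T₀`. Positivity then propagates: as long as `P > 0` entrywise, `P' = N P ≥ 0`, so no
entry can decrease, hence none can reach `0`.
-/

open Filter Topology Set

theorem HasDerivWithinAt.eventually_lt_of_deriv_pos {f : ℝ → ℝ} {f' x : ℝ}
    (hf : HasDerivWithinAt f f' (Ici x) x) (hf' : 0 < f') : ∀ᶠ z in 𝓝[>] x, f x < f z := by
  have hslope : Tendsto (slope f x) (𝓝[>] x) (𝓝 f') :=
    (hasDerivWithinAt_iff_tendsto_slope' (lt_irrefl x)).1 hf.Ioi_of_Ici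
  filter_upwards [hslope.eventually (eventually_gt_nhds hf'), self_mem_nhdsWithin] with z hz hxz
  exact (slope_pos_iff_of_le hxz.le).1 hz

-- Real induction on the closed set `{t | f a ≤ f t}`: near a point of it `f` stays positive,
-- so `f` is monotone there.
theorem left_le_of_pos_imp_deriv_nonneg {ι : Type*} [Finite ι] {f f' : ℝ → ι → ℝ} {a b : ℝ}
    (hf : ∀ t ∈ Icc a b, ∀ i, HasDerivWithinAt (fun s => f s i) (f' t i) (Icc a b) t)
    (hf' : ∀ t ∈ Icc a b, (∀ i, 0 < f t i) → ∀ i, 0 ≤ f' t i) (ha : ∀ i, 0 < f a i) :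
    ∀ t ∈ Icc a b, f a ≤ f t := by
  have hcont : ∀ i, ContinuousOn (fun s => f s i) (Icc a b) :=
    fun i t ht => (hf t ht i).continuousWithinAt
  refine IsClosed.Icc_subset_of_forall_mem_nhdsWithin (s := f ⁻¹' Ici (f a)) ?_ (le_refl (f a)) ?_
  · rw [inter_comm]
    exact (continuousOn_pi.2 hcont).preimage_isClosed_of_isClosed isClosed_Icc isClosed_Ici
  rintro x ⟨hax, hxa, hxb⟩
  have hpos : ∀ᶠ t in 𝓝[>] x, t ∈ Icc a b ∧ ∀ i, 0 < f t i := by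
    have hIcc : Icc a b ∈ 𝓝[>] x := Icc_mem_nhdsGT_of_mem ⟨hxa, hxb⟩
    have hfx : ∀ᶠ t in 𝓝[Icc a b] x, ∀ i, 0 < f t i :=
      eventually_all.2 fun i => (hcont i x ⟨hxa, hxb.le⟩).eventually
        (eventually_gt_nhds ((ha i).trans_le (hax i)))
    exact Filter.Eventually.and hIcc (nhdsWithin_le_of_mem hIcc hfx)
  obtain ⟨u, hxu, hu⟩ := mem_nhdsGT_iff_exists_Ioo_subset.1 hpos
  filter_upwards [Ioo_mem_nhdsGT hxu] with y hy
  have hsub : Icc x y ⊆ Icc a b := Icc_subset_Icc hxa (hu hy).1.2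
  have hmono : ∀ i, MonotoneOn (fun s => f s i) (Icc x y) := fun i =>
    monotoneOn_of_hasDerivWithinAt_nonneg (convex_Icc x y) ((hcont i).mono hsub)
      (fun t ht => (hf t (hsub (interior_subset ht)) i).mono (interior_subset.trans hsub))
      fun t ht => by
        rw [interior_Icc] at ht
        exact hf' t (hsub (Ioo_subset_Icc_self ht)) (hu ⟨ht.1, ht.2.trans hy.2⟩).2 i
  exact fun i => (hax i).trans <|
    hmono i (left_mem_Icc.2 hy.1.le) (right_mem_Icc.2 hy.1.le) hy.1.le

theorem stmt_14_general (m : ℕ) (T₀ : ℝ)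
    (N : ℝ → Matrix (Fin m) (Fin m) ℝ)
    (hN0 : ∀ t ≥ T₀, ∀ i j, 0 < N t i j)
    (P : ℝ → Matrix (Fin m) (Fin m) ℝ)
    (hP : ∀ t ≥ T₀, ∀ i j,
      HasDerivWithinAt (fun s => P s i j) ((N t * P t) i j) (Set.Ici T₀) t)
    (hP0 : P T₀ = 1) :
    ∀ t > T₀, ∀ i j, 0 < P t i j := by
  intro t ht i j
  have hstart : ∀ᶠ s in 𝓝[>] T₀, ∀ k l, 0 < P s k l := by
    refine eventually_all.2 fun k => eventually_all.2 fun l => ?_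
    have hderiv : 0 < (N T₀ * P T₀) k l := by
      rw [hP0, Matrix.mul_one]
      exact hN0 T₀ le_rfl k l
    have hinit : 0 ≤ P T₀ k l := by
      rw [hP0]
      exact Matrix.zero_le_one_elem k l
    filter_upwards [(hP T₀ le_rfl k l).eventually_lt_of_deriv_pos hderiv] with s hs
    exact hinit.trans_lt hs
  obtain ⟨s, ⟨hs, hst⟩, hPs⟩ := (Filter.Eventually.and (Ioo_mem_nhdsGT ht) hstart).exists
  have hgrow : ∀ r ∈ Icc s t, ∀ p : Fin m × Fin m, P s p.1 p.2 ≤ P r p.1 p.2 := by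
    refine left_le_of_pos_imp_deriv_nonneg (f := fun r (p : Fin m × Fin m) => P r p.1 p.2)
      (f' := fun r p => (N r * P r) p.1 p.2) ?_ ?_ fun p => hPs p.1 p.2
    · intro r hr p
      exact (hP r (hs.le.trans hr.1) p.1 p.2).mono
        (Icc_subset_Ici_self.trans (Ici_subset_Ici.2 hs.le))
    · intro r hr hpos p
      rw [Matrix.mul_apply]
      exact Finset.sum_nonneg fun k _ =>
        mul_nonneg (hN0 r (hs.le.trans hr.1) p.1 k).le (hpos (k, p.2)).le
  exact (hPs i j).trans_le (hgrow t ⟨hst.le, le_rfl⟩ (i, j))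

/-- Strict positivity of the fundamental matrix (used in Corollary 2 ('mon2') of
the paper): if `N(t)` is entrywise strictly positive for `t ≥ T₀` and `P' = N·P`,
`P(T₀) = 1`, then `P(t)` is entrywise strictly positive for every `t > T₀`. -/
theorem stmt_14 (m : ℕ) (T₀ : ℝ)
    (N : ℝ → Matrix (Fin m) (Fin m) ℝ)
    (hNc : ∀ i j, ContinuousOn (fun t => N t i j) (Set.Ici T₀))
    (hN0 : ∀ t ≥ T₀, ∀ i j, 0 < N t i j)
    (P : ℝ → Matrix (Fin m) (Fin m) ℝ)
    (hP : ∀ t ≥ T₀, ∀ i j,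
      HasDerivWithinAt (fun s => P s i j) ((N t * P t) i j) (Set.Ici T₀) t)
    (hP0 : P T₀ = 1) :
    ∀ t > T₀, ∀ i j, 0 < P t i j :=
  stmt_14_general m T₀ N hN0 P hP hP0
end

section
/- Let m ∈ ℕ, T₀ ∈ ℝ, let F : [T₀,∞) → (m × m real matrices) and M : [T₀,∞) → ℝ be continuous, and suppose every entry of F(t) + M(t)·1 is nonnegative for every t ≥ T₀ (where 1 is the identity matrix). Let Q : [T₀,∞) → (m × m real matrices) be differentiable with Q'(t) = F(t)·Q(t) for all t ≥ T₀ and Q(T₀) = 1, and let P : [T₀,∞) → (m × m real matrices) be differentiable with P'(t) = (F(t) + M(t)·1)·P(t) for all t ≥ T₀ and P(T₀) = 1. Then P(t) = Q(t)·exp(∫_{T₀}^t M(s) ds) for every t ≥ T₀, and consequently every entry of Q(t) is nonnegative for every t ≥ T₀. -/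
/-!
Write `g(t) = ∫_{T₀}^t M`. The integrating factor `exp (-g)` turns `P' = (F + M·1) P` into
`(exp (-g) P)' = F (exp (-g) P)`, so `exp (-g) P = Q` column by column, by uniqueness of solutions
of linear ODEs.

Nonnegativity is a property of `P`, whose coefficient `A = F + M·1` is entrywise nonnegative.
For a solution of `x' = A x`, splitting `x = x⁺ - x⁻` gives `(x + h A x)⁻ ≤ x⁻ + h A x⁻` for
`h ≥ 0`, so the sup norm `d` of `x⁻` has right Dini derivative at most `‖A‖ d`. Grönwall's
inequality with `d(T₀) = 0` forces `d = 0`.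
-/

open Filter Topology Set Matrix

attribute [local instance] Matrix.linftyOpNormedAddCommGroup Matrix.linftyOpNormedSpace

instance Pi.hasSolidNorm {ι α : Type*} [Fintype ι] [NormedAddCommGroup α] [Lattice α]
    [HasSolidNorm α] : HasSolidNorm (ι → α) where
  solid x y h := (pi_norm_le_iff_of_nonneg (norm_nonneg y)).2 fun i =>
    (HasSolidNorm.solid (by simpa only [Pi.abs_apply] using h i)).trans (norm_le_pi_norm y i)

lemma negPart_sub_le {α : Type*} [Lattice α] [AddGroup α] [AddLeftMono α] [AddRightMono α]
    {u w : α} (hu : 0 ≤ u) (hw : 0 ≤ w) : (u - w)⁻ ≤ w := by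
  rw [negPart_def, neg_sub]
  exact sup_le (sub_le_self w hu) hw

theorem HasDerivWithinAt.liminf_right_slope_comp_le {E : Type*} [NormedAddCommGroup E]
    [NormedSpace ℝ E] {f : ℝ → E} {f' : E} {φ : E → ℝ} {x c r : ℝ}
    (hf : HasDerivWithinAt f f' (Ici x) x) (hφ : LipschitzWith 1 φ)
    (hc : ∀ h, 0 < h → φ (f x + h • f') ≤ φ (f x) + h * c) (hr : c < r) :
    ∃ᶠ z in 𝓝[>] x, (z - x)⁻¹ * (φ (f z) - φ (f x)) < r := by
  have hslope := (hasDerivWithinAt_iff_tendsto_slope' (s := Ioi x) (lt_irrefl x)).1 hf.Ioi_of_Ici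
  have hclose : ∀ᶠ z in 𝓝[>] x, ‖slope f x z - f'‖ < r - c := by
    simpa only [dist_eq_norm] using (Metric.tendsto_nhds.1 hslope) (r - c) (sub_pos.2 hr)
  refine (hclose.and self_mem_nhdsWithin).mono (fun z ⟨hz, hxz⟩ => ?_) |>.frequently
  have hh : 0 < z - x := sub_pos.2 hxz
  have hrem : ‖f z - (f x + (z - x) • f')‖ = (z - x) * ‖slope f x z - f'‖ := by
    rw [← Real.norm_of_nonneg hh.le, ← norm_smul, smul_sub, slope_def_module,
      Real.norm_of_nonneg hh.le, smul_inv_smul₀ hh.ne']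
    congr 1
    abel
  have hlip : φ (f z) ≤ φ (f x + (z - x) • f') + ‖f z - (f x + (z - x) • f')‖ := by
    simpa only [NNReal.coe_one, one_mul, dist_eq_norm] using
      hφ.le_add_mul (f z) (f x + (z - x) • f')
  calc (z - x)⁻¹ * (φ (f z) - φ (f x))
      ≤ (z - x)⁻¹ * ((z - x) * ‖slope f x z - f'‖ + (z - x) * c) := by
        gcongr
        linarith [hc (z - x) hh]
    _ = ‖slope f x z - f'‖ + c := by field_simp
    _ < r := by linarith

lemma continuousOn_Icc_of_forall_hasDerivWithinAt_Ici {E : Type*} [NormedAddCommGroup E]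
    [NormedSpace ℝ E] {f f' : ℝ → E} {a : ℝ}
    (hf : ∀ t ∈ Ici a, HasDerivWithinAt f (f' t) (Ici a) t) (b : ℝ) : ContinuousOn f (Icc a b) :=
  fun t ht => (hf t ht.1).continuousWithinAt.mono Icc_subset_Ici_self

lemma hasDerivWithinAt_integral_Ici {E : Type*} [NormedAddCommGroup E] [NormedSpace ℝ E]
    [CompleteSpace E] {f : ℝ → E} {a t : ℝ} (hf : ContinuousOn f (Ici a)) (ht : t ∈ Ici a) :
    HasDerivWithinAt (fun u => ∫ s in a..u, f s) (f t) (Ici a) t := by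
  set f' : ℝ → E := fun s => f (max s a)
  have hf' : Continuous f' := hf.comp_continuous (by fun_prop) fun s => le_max_right s a
  have heq : ∀ u ∈ Ici a, ∫ s in a..u, f' s = ∫ s in a..u, f s := fun u hu =>
    intervalIntegral.integral_congr fun s hs => by simp [f', max_eq_left (uIcc_of_le (mem_Ici.1 hu) ▸ hs).1]
  have hderiv := (hf'.integral_hasStrictDerivAt a t).hasDerivAt.hasDerivWithinAt (s := Ici a)
  rw [show f' t = f t from congrArg f (max_eq_left ht)] at hderiv
  exact hderiv.congr (fun u hu => (heq u hu).symm) (heq t ht).symm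

lemma Matrix.mulVec_nonneg {ι κ R : Type*} [Fintype κ] [Semiring R] [PartialOrder R]
    [IsOrderedRing R] {A : Matrix ι κ R} (hA : ∀ i j, 0 ≤ A i j) {v : κ → R} (hv : 0 ≤ v) :
    0 ≤ A *ᵥ v :=
  fun i => dotProduct_nonneg_of_nonneg (hA i) hv

section LinearODE

variable {ι : Type*} [Fintype ι]

lemma Matrix.lipschitzWith_mulVec {κ : Type*} [Fintype κ] (A : Matrix ι κ ℝ) :
    LipschitzWith ‖A‖₊ (A *ᵥ ·) :=
  LipschitzWith.of_dist_le_mul fun v w => by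
    simpa only [dist_eq_norm, mulVec_sub, coe_nnnorm] using linfty_opNorm_mulVec A (v - w)

lemma negPart_add_smul_mulVec_le {A : Matrix ι ι ℝ} (hA : ∀ i j, 0 ≤ A i j) {h : ℝ} (hh : 0 ≤ h)
    (v : ι → ℝ) : (v + h • A *ᵥ v)⁻ ≤ v⁻ + h • A *ᵥ v⁻ := by
  have hsplit : v + h • A *ᵥ v = (v⁺ + h • A *ᵥ v⁺) - (v⁻ + h • A *ᵥ v⁻) := by
    conv_lhs => rw [← posPart_sub_negPart v]
    rw [mulVec_sub, smul_sub]
    abel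
  rw [hsplit]
  exact negPart_sub_le
    (add_nonneg (posPart_nonneg v) (smul_nonneg hh (mulVec_nonneg hA (posPart_nonneg v))))
    (add_nonneg (negPart_nonneg v) (smul_nonneg hh (mulVec_nonneg hA (negPart_nonneg v))))

lemma norm_negPart_add_smul_mulVec_le {A : Matrix ι ι ℝ} (hA : ∀ i j, 0 ≤ A i j) {h : ℝ}
    (hh : 0 ≤ h) (v : ι → ℝ) : ‖(v + h • A *ᵥ v)⁻‖ ≤ (1 + h * ‖A‖) * ‖v⁻‖ :=
  calc ‖(v + h • A *ᵥ v)⁻‖ ≤ ‖v⁻ + h • A *ᵥ v⁻‖ := by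
        apply norm_le_norm_of_abs_le_abs
        rw [abs_of_nonneg (negPart_nonneg _),
          abs_of_nonneg ((negPart_nonneg _).trans (negPart_add_smul_mulVec_le hA hh v))]
        exact negPart_add_smul_mulVec_le hA hh v
    _ ≤ ‖v⁻‖ + h * (‖A‖ * ‖v⁻‖) := by
        grw [norm_add_le, norm_smul, Real.norm_of_nonneg hh, linfty_opNorm_mulVec]
    _ = (1 + h * ‖A‖) * ‖v⁻‖ := by ring

variable {A : ℝ → Matrix ι ι ℝ} {x y : ℝ → ι → ℝ} {a b K : ℝ}

theorem eqOn_of_hasDerivWithinAt_mulVec (hK : ∀ t ∈ Ico a b, ‖A t‖ ≤ K)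
    (hx : ContinuousOn x (Icc a b)) (hx' : ∀ t ∈ Ico a b, HasDerivWithinAt x (A t *ᵥ x t) (Ici t) t)
    (hy : ContinuousOn y (Icc a b)) (hy' : ∀ t ∈ Ico a b, HasDerivWithinAt y (A t *ᵥ y t) (Ici t) t)
    (ha : x a = y a) : EqOn x y (Icc a b) :=
  ODE_solution_unique_of_mem_Icc_right (s := fun _ => univ)
    (fun t ht => ((lipschitzWith_mulVec (A t)).weaken (by
      rw [← norm_toNNReal]; exact Real.toNNReal_le_toNNReal (hK t ht))).lipschitzOnWith)
    hx hx' (fun _ _ => trivial) hy hy' (fun _ _ => trivial) ha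

theorem nonneg_of_hasDerivWithinAt_mulVec (hA : ∀ t ∈ Ico a b, ∀ i j, 0 ≤ A t i j)
    (hK : ∀ t ∈ Ico a b, ‖A t‖ ≤ K)
    (hx : ContinuousOn x (Icc a b)) (hx' : ∀ t ∈ Ico a b, HasDerivWithinAt x (A t *ᵥ x t) (Ici t) t)
    (ha : 0 ≤ x a) : ∀ t ∈ Icc a b, 0 ≤ x t := by
  have hφ : LipschitzWith 1 fun v : ι → ℝ => ‖v⁻‖ :=
    (lipschitzWith_one_norm.comp lipschitzWith_negPart).weaken (by simp)
  have hbound : ∀ t ∈ Icc a b, ‖(x t)⁻‖ ≤ gronwallBound 0 K 0 (t - a) := by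
    refine le_gronwallBound_of_liminf_deriv_right_le (f' := fun t => K * ‖(x t)⁻‖)
      (hφ.continuous.comp_continuousOn hx)
      (fun t ht r hr => (hx' t ht).liminf_right_slope_comp_le hφ (fun h hh => ?_) hr)
      (by simp [negPart_eq_zero.2 ha]) (fun _ _ => (add_zero _).ge)
    grw [norm_negPart_add_smul_mulVec_le (hA t ht) hh.le, hK t ht]
    linarith
  intro t ht
  rw [← negPart_eq_zero, ← norm_le_zero_iff, ← gronwallBound_ε0_δ0 K (t - a)]
  exact hbound t ht

theorem eqOn_Ici_of_hasDerivWithinAt_mulVec (hA : ContinuousOn A (Ici a))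
    (hx : ∀ t ∈ Ici a, HasDerivWithinAt x (A t *ᵥ x t) (Ici a) t)
    (hy : ∀ t ∈ Ici a, HasDerivWithinAt y (A t *ᵥ y t) (Ici a) t) (ha : x a = y a) :
    EqOn x y (Ici a) := by
  intro b hb
  obtain ⟨K, hK⟩ :=
    isCompact_Icc.exists_bound_of_continuousOn (hA.mono (Icc_subset_Ici_self : Icc a b ⊆ Ici a))
  exact eqOn_of_hasDerivWithinAt_mulVec (fun t ht => hK t (Ico_subset_Icc_self ht))
    (continuousOn_Icc_of_forall_hasDerivWithinAt_Ici hx b)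
    (fun t ht => (hx t ht.1).mono (Ici_subset_Ici.2 ht.1))
    (continuousOn_Icc_of_forall_hasDerivWithinAt_Ici hy b)
    (fun t ht => (hy t ht.1).mono (Ici_subset_Ici.2 ht.1)) ha ⟨hb, le_rfl⟩

theorem nonneg_Ici_of_hasDerivWithinAt_mulVec (hA : ContinuousOn A (Ici a))
    (hA₀ : ∀ t ∈ Ici a, ∀ i j, 0 ≤ A t i j)
    (hx : ∀ t ∈ Ici a, HasDerivWithinAt x (A t *ᵥ x t) (Ici a) t) (ha : 0 ≤ x a) :
    ∀ t ∈ Ici a, 0 ≤ x t := by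
  intro b hb
  obtain ⟨K, hK⟩ :=
    isCompact_Icc.exists_bound_of_continuousOn (hA.mono (Icc_subset_Ici_self : Icc a b ⊆ Ici a))
  exact nonneg_of_hasDerivWithinAt_mulVec (fun t ht => hA₀ t ht.1)
    (fun t ht => hK t (Ico_subset_Icc_self ht))
    (continuousOn_Icc_of_forall_hasDerivWithinAt_Ici hx b)
    (fun t ht => (hx t ht.1).mono (Ici_subset_Ici.2 ht.1)) ha b ⟨hb, le_rfl⟩

lemma HasDerivWithinAt.exp_neg_smul_of_mulVec_add_smul_one [DecidableEq ι] {B : Matrix ι ι ℝ}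
    {c t : ℝ} {s : Set ℝ} {g : ℝ → ℝ} (hx : HasDerivWithinAt x ((B + c • 1) *ᵥ x t) s t)
    (hg : HasDerivWithinAt g c s t) :
    HasDerivWithinAt (fun u => Real.exp (-g u) • x u) (B *ᵥ (Real.exp (-g t) • x t)) s t := by
  have hderiv : B *ᵥ (Real.exp (-g t) • x t)
      = Real.exp (-g t) • ((B + c • 1) *ᵥ x t) + (Real.exp (-g t) * -c) • x t := by
    rw [add_mulVec, smul_mulVec, one_mulVec, mulVec_smul]
    module
  rw [hderiv]
  exact hg.neg.exp.smul hx

end LinearODE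

/-- Key step of the proof of Proposition 8 ('mon') of the paper: if
`F(t) + M(t)·1` is entrywise nonnegative (Metzler-type condition), `Q' = F·Q`
with `Q(T₀) = 1`, and `P' = (F + M·1)·P` with `P(T₀) = 1`, then
`P(t) = exp(∫_{T₀}^t M)·Q(t)` for all `t ≥ T₀`, and consequently `Q(t)` is
entrywise nonnegative for all `t ≥ T₀`. -/
theorem stmt_15 (m : ℕ) (T₀ : ℝ)
    (F : ℝ → Matrix (Fin m) (Fin m) ℝ) (M : ℝ → ℝ)
    (hFc : ∀ i j, ContinuousOn (fun t => F t i j) (Set.Ici T₀))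
    (hMc : ContinuousOn M (Set.Ici T₀))
    (hpos : ∀ t ≥ T₀, ∀ i j,
      0 ≤ (F t + M t • (1 : Matrix (Fin m) (Fin m) ℝ)) i j)
    (Q P : ℝ → Matrix (Fin m) (Fin m) ℝ)
    (hQ : ∀ t ≥ T₀, ∀ i j,
      HasDerivWithinAt (fun s => Q s i j) ((F t * Q t) i j) (Set.Ici T₀) t)
    (hQ0 : Q T₀ = 1)
    (hP : ∀ t ≥ T₀, ∀ i j,
      HasDerivWithinAt (fun s => P s i j)
        (((F t + M t • (1 : Matrix (Fin m) (Fin m) ℝ)) * P t) i j)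
        (Set.Ici T₀) t)
    (hP0 : P T₀ = 1) :
    ∀ t ≥ T₀,
      P t = Real.exp (∫ s in T₀..t, M s) • Q t ∧ ∀ i j, 0 ≤ Q t i j := by
  intro t ht
  have hF : ContinuousOn F (Ici T₀) := continuousOn_pi.2 fun i => continuousOn_pi.2 (hFc i)
  have hA : ContinuousOn (fun s => F s + M s • (1 : Matrix (Fin m) (Fin m) ℝ)) (Ici T₀) :=
    hF.add (hMc.smul continuousOn_const)
  set g : ℝ → ℝ := fun u => ∫ s in T₀..u, M s
  have hg : ∀ s ∈ Ici T₀, HasDerivWithinAt g (M s) (Ici T₀) s := fun s hs =>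
    hasDerivWithinAt_integral_Ici hMc hs
  have hcol : ∀ j,
      EqOn (fun u => Real.exp (-g u) • fun i => P u i j) (fun u i => Q u i j) (Ici T₀) :=
    fun j => eqOn_Ici_of_hasDerivWithinAt_mulVec hF
      (fun s hs => (hasDerivWithinAt_pi.2 fun i => hP s hs i j)
        |>.exp_neg_smul_of_mulVec_add_smul_one (hg s hs))
      (fun s hs => hasDerivWithinAt_pi.2 fun i => hQ s hs i j)
      (by simp [g, hP0, hQ0])
  have hPQ : P t = Real.exp (g t) • Q t := by
    ext i j
    have := congrFun (hcol j ht) i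
    simp only [Pi.smul_apply, smul_eq_mul] at this
    rw [Matrix.smul_apply, smul_eq_mul, ← this, Real.exp_neg,
      mul_inv_cancel_left₀ (Real.exp_ne_zero _)]
  have hPnn : ∀ i j, 0 ≤ P t i j := fun i j =>
    nonneg_Ici_of_hasDerivWithinAt_mulVec hA hpos
      (fun s hs => hasDerivWithinAt_pi.2 fun i => hP s hs i j)
      (fun i => by simp only [hP0, one_apply]; split_ifs <;> norm_num) t ht i
  refine ⟨hPQ, fun i j => ?_⟩
  have := hPnn i j
  rw [hPQ, Matrix.smul_apply, smul_eq_mul] at this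
  exact (mul_nonneg_iff_of_pos_left (Real.exp_pos _)).1 this
end

section
/- Let m ∈ ℕ, λ ≥ 0, let F : [0,∞) → (m × m real matrices) and g : [0,∞) → ℝ^m (row vectors) be continuous, with every component of g(t) nonnegative for every t ≥ 0, and suppose there is a continuous M : [0,∞) → ℝ such that every entry of F(t) + M(t)·1 is nonnegative for every t ≥ 0. Let A : [0,∞) → (m × m real matrices) be differentiable with A'(t) = F(t)·A(t), A(0) = 1, and A(t) invertible for every t ≥ 0. Assume the improper integral I(T) := lim_{S→∞} ∫_T^S g(t)·A(t) dt exists in ℝ^m for every T ≥ 0, and let ψ : [0,∞) → ℝ^m be defined by ψ(T) := λ·I(T)·A(T)^{-1}. Then every component of ψ(T) is nonnegative for every T ≥ 0. -/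
/-!
For `t ≥ T` the transition matrix `Φ(t) = A(t) A(T)⁻¹` solves `Φ' = FΦ`, `Φ(T) = 1`, and
`I(T) A(T)⁻¹ = lim_S ∫_T^S g(t) Φ(t) dt`; so it suffices that `Φ(t)` is entrywise nonnegative.
Multiplying a solution of `y' = F y` by `exp (K t)`, with `K ≥ M` on `[T, t]`, gives a solution of
`u' = (F + K·1) u` with an entrywise nonnegative coefficient matrix. For such a system the total
negative part `∑ i, (u i)⁻` has right Dini derivative at most a constant times itself and vanishes
at `T`, so by Grönwall it vanishes identically.
-/

open Filter Topology Set Matrix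

theorem mul_negPart_sub_negPart_le {c : ℝ} (hc : 0 ≤ c) (a b : ℝ) :
    c * (a⁻ - b⁻) ≤ (c * (a - b))⁻ := by
  have hsub : a⁻ - b⁻ ≤ (a - b)⁻ := by
    rw [sub_le_iff_le_add, negPart_def a]
    refine sup_le ?_ (add_nonneg (negPart_nonneg _) (negPart_nonneg _))
    calc -a = -(a - b) + -b := by ring
      _ ≤ (a - b)⁻ + b⁻ := add_le_add (neg_le_negPart _) (neg_le_negPart _)
  calc c * (a⁻ - b⁻) ≤ c * (a - b)⁻ := mul_le_mul_of_nonneg_left hsub hc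
    _ = (c * (a - b))⁻ := by
      rw [negPart_def, negPart_def, mul_max_of_nonneg _ _ hc, mul_zero, mul_neg]

theorem negPart_mulVec_apply_le {ι : Type*} [Fintype ι] {B : Matrix ι ι ℝ}
    (hB : ∀ i j, 0 ≤ B i j) (v : ι → ℝ) (i : ι) : ((B *ᵥ v) i)⁻ ≤ ∑ j, B i j * (v j)⁻ := by
  rw [negPart_def]
  refine sup_le ?_ (Finset.sum_nonneg fun j _ => mul_nonneg (hB i j) (negPart_nonneg _))
  calc -(B *ᵥ v) i = ∑ j, B i j * -v j := by simp [mulVec, dotProduct]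
    _ ≤ ∑ j, B i j * (v j)⁻ :=
      Finset.sum_le_sum fun j _ => mul_le_mul_of_nonneg_left (neg_le_negPart _) (hB i j)

theorem exists_forall_entry_le_of_continuousOn {ι κ : Type*} [Finite ι] [Finite κ]
    {B : ℝ → Matrix ι κ ℝ} {s : Set ℝ} (hs : IsCompact s)
    (hB : ∀ i j, ContinuousOn (fun t => B t i j) s) : ∃ C, ∀ t ∈ s, ∀ i j, B t i j ≤ C := by
  choose C hC using fun i j => hs.bddAbove_image (hB i j)
  obtain ⟨C', hC'⟩ := Finite.bddAbove_range fun p : ι × κ => C p.1 p.2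
  exact ⟨C', fun t ht i j => (hC i j (mem_image_of_mem _ ht)).trans (hC' ⟨(i, j), rfl⟩)⟩

theorem HasDerivWithinAt.tendsto_slope_nhdsGT {E : Type*} [NormedAddCommGroup E] [NormedSpace ℝ E]
    {f : ℝ → E} {f' : E} {x : ℝ} (hf : HasDerivWithinAt f f' (Ici x) x) :
    Tendsto (slope f x) (𝓝[>] x) (𝓝 f') :=
  (hasDerivWithinAt_iff_tendsto_slope' (lt_irrefl x)).1 (hf.mono Ioi_subset_Ici_self)

theorem nonneg_of_hasDerivWithinAt_nonneg_mulVec {ι : Type*} [Fintype ι] {B : ℝ → Matrix ι ι ℝ}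
    {u : ℝ → ι → ℝ} {a b : ℝ}
    (hB : ∀ i j, ContinuousOn (fun t => B t i j) (Icc a b))
    (hB₀ : ∀ t ∈ Icc a b, ∀ i j, 0 ≤ B t i j)
    (hu : ContinuousOn u (Icc a b))
    (hu' : ∀ t ∈ Ico a b, HasDerivWithinAt u (B t *ᵥ u t) (Ici t) t)
    (ha : 0 ≤ u a) : ∀ t ∈ Icc a b, 0 ≤ u t := by
  obtain ⟨C, hC⟩ := exists_forall_entry_le_of_continuousOn isCompact_Icc hB
  set f : ℝ → ℝ := fun t => ∑ i, (u t i)⁻ with hf_def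
  have hf : ContinuousOn f (Icc a b) := by
    refine continuousOn_finsetSum _ fun i _ => continuous_negPart.comp_continuousOn ?_
    exact (continuous_apply i).comp_continuousOn hu
  have hf_dini : ∀ x ∈ Ico a b, ∀ r, ∑ i, ((B x *ᵥ u x) i)⁻ < r →
      ∃ᶠ z in 𝓝[>] x, (z - x)⁻¹ * (f z - f x) < r := by
    intro x hx r hr
    have hlim : Tendsto (fun z => ∑ i, (slope u x z i)⁻) (𝓝[>] x) (𝓝 (∑ i, ((B x *ᵥ u x) i)⁻)) :=
      tendsto_finsetSum _ fun i _ =>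
        (continuous_negPart.tendsto _).comp (((continuous_apply i).tendsto _).comp
          (hu' x hx).tendsto_slope_nhdsGT)
    refine ((hlim.eventually (gt_mem_nhds hr)).and self_mem_nhdsWithin).mono ?_ |>.frequently
    rintro z ⟨hzr, hxz⟩
    refine lt_of_le_of_lt ?_ hzr
    rw [hf_def, ← Finset.sum_sub_distrib, Finset.mul_sum]
    exact Finset.sum_le_sum fun i _ =>
      mul_negPart_sub_negPart_le (inv_nonneg.2 (sub_nonneg.2 (le_of_lt hxz))) _ _
  have hbound : ∀ x ∈ Ico a b, ∑ i, ((B x *ᵥ u x) i)⁻ ≤ (Fintype.card ι * C) * f x + 0 := by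
    intro x hx
    have hx' : x ∈ Icc a b := Ico_subset_Icc_self hx
    calc ∑ i, ((B x *ᵥ u x) i)⁻ ≤ ∑ i, ∑ j, B x i j * (u x j)⁻ :=
          Finset.sum_le_sum fun i _ => negPart_mulVec_apply_le (hB₀ x hx') _ i
      _ ≤ ∑ _i : ι, ∑ j, C * (u x j)⁻ :=
          Finset.sum_le_sum fun i _ => Finset.sum_le_sum fun j _ =>
            mul_le_mul_of_nonneg_right (hC x hx' i j) (negPart_nonneg _)
      _ = (Fintype.card ι * C) * f x + 0 := by simp [hf_def, Finset.mul_sum, mul_assoc]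
  have ha' : f a ≤ 0 := by simp [hf_def, negPart_eq_zero.2 (ha _)]
  intro t ht i
  have hft := le_gronwallBound_of_liminf_deriv_right_le hf hf_dini ha' hbound t ht
  rw [gronwallBound_ε0_δ0] at hft
  have hi : (u t i)⁻ ≤ 0 :=
    (Finset.single_le_sum (fun j _ => negPart_nonneg (u t j)) (Finset.mem_univ i)).trans hft
  exact negPart_eq_zero.1 (le_antisymm hi (negPart_nonneg _))

theorem nonneg_of_hasDerivWithinAt_metzler_mulVec {ι : Type*} [Fintype ι] [DecidableEq ι]
    {F : ℝ → Matrix ι ι ℝ} {M : ℝ → ℝ} {y : ℝ → ι → ℝ} {a b : ℝ}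
    (hF : ∀ i j, ContinuousOn (fun t => F t i j) (Icc a b)) (hM : ContinuousOn M (Icc a b))
    (hFM : ∀ t ∈ Icc a b, ∀ i j, 0 ≤ (F t + M t • (1 : Matrix ι ι ℝ)) i j)
    (hy : ContinuousOn y (Icc a b))
    (hy' : ∀ t ∈ Ico a b, HasDerivWithinAt y (F t *ᵥ y t) (Ici t) t)
    (ha : 0 ≤ y a) : ∀ t ∈ Icc a b, 0 ≤ y t := by
  obtain ⟨K, hK⟩ := isCompact_Icc.bddAbove_image hM
  set B : ℝ → Matrix ι ι ℝ := fun t => F t + K • (1 : Matrix ι ι ℝ)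
  set u : ℝ → ι → ℝ := fun t => Real.exp (K * t) • y t
  have hB : ∀ i j, ContinuousOn (fun t => B t i j) (Icc a b) := fun i j => by
    simp only [B, Matrix.add_apply, Matrix.smul_apply, smul_eq_mul]
    exact (hF i j).add continuousOn_const
  have hB₀ : ∀ t ∈ Icc a b, ∀ i j, 0 ≤ B t i j := fun t ht i j => by
    have hMK : M t ≤ K := hK (mem_image_of_mem M ht)
    have h1 : 0 ≤ (1 : Matrix ι ι ℝ) i j := by rw [one_apply]; split_ifs <;> norm_num
    calc 0 ≤ (F t + M t • (1 : Matrix ι ι ℝ)) i j + (K - M t) * (1 : Matrix ι ι ℝ) i j :=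
          add_nonneg (hFM t ht i j) (mul_nonneg (sub_nonneg.2 hMK) h1)
      _ = B t i j := by simp only [B, Matrix.add_apply, Matrix.smul_apply, smul_eq_mul]; ring
  have hu : ContinuousOn u (Icc a b) :=
    (by fun_prop : Continuous fun t => Real.exp (K * t)).continuousOn.smul hy
  have hu' : ∀ t ∈ Ico a b, HasDerivWithinAt u (B t *ᵥ u t) (Ici t) t := by
    intro t ht
    have hexp :
        HasDerivWithinAt (fun s => Real.exp (K * s)) (Real.exp (K * t) * K) (Ici t) t := by
      simpa using ((hasDerivAt_id t).const_mul K).exp.hasDerivWithinAt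
    refine (hexp.smul (hy' t ht)).congr_deriv ?_
    simp only [B, u, add_mulVec, mulVec_smul, smul_mulVec, one_mulVec]
    rw [smul_add, smul_smul]
  intro t ht
  have hut := nonneg_of_hasDerivWithinAt_nonneg_mulVec hB hB₀ hu hu'
    (smul_nonneg (Real.exp_pos _).le ha) t ht
  exact (smul_nonneg_iff_nonneg_of_pos_left (Real.exp_pos _)).1 hut

theorem hasDerivWithinAt_mul_const_apply {ι κ ν : Type*} [Fintype κ]
    {A : ℝ → Matrix ι κ ℝ} {A' : Matrix ι κ ℝ} {s : Set ℝ} {t : ℝ}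
    (hA : ∀ i k, HasDerivWithinAt (fun s => A s i k) (A' i k) s t) (C : Matrix κ ν ℝ)
    (i : ι) (j : ν) :
    HasDerivWithinAt (fun s => (A s * C) i j) ((A' * C) i j) s t := by
  simp only [mul_apply]
  exact HasDerivWithinAt.fun_sum fun k _ => (hA i k).mul_const _

theorem mul_inv_apply_nonneg_of_metzler {ι : Type*} [Fintype ι] [DecidableEq ι]
    {F A : ℝ → Matrix ι ι ℝ} {M : ℝ → ℝ} {T : ℝ}
    (hF : ∀ i j, ContinuousOn (fun t => F t i j) (Ici T)) (hM : ContinuousOn M (Ici T))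
    (hFM : ∀ t ≥ T, ∀ i j, 0 ≤ (F t + M t • (1 : Matrix ι ι ℝ)) i j)
    (hA : ∀ t ≥ T, ∀ i j, HasDerivWithinAt (fun s => A s i j) ((F t * A t) i j) (Ici T) t)
    (hAT : IsUnit (A T)) {t : ℝ} (ht : T ≤ t) (i j : ι) : 0 ≤ (A t * (A T)⁻¹) i j := by
  set y : ℝ → ι → ℝ := fun s k => (A s * (A T)⁻¹) k j
  have hy' : ∀ s ≥ T, HasDerivWithinAt y (F s *ᵥ y s) (Ici T) s := fun s hs => by
    refine hasDerivWithinAt_pi.2 fun k => ?_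
    have := hasDerivWithinAt_mul_const_apply (hA s hs) (A T)⁻¹ k j
    rwa [Matrix.mul_assoc] at this
  have hyT : 0 ≤ y T := fun k => by
    simp only [y, mul_nonsing_inv _ ((isUnit_iff_isUnit_det _).1 hAT), one_apply]
    split_ifs <;> norm_num
  refine nonneg_of_hasDerivWithinAt_metzler_mulVec (fun k l => (hF k l).mono Icc_subset_Ici_self)
    (hM.mono Icc_subset_Ici_self) (fun s hs => hFM s hs.1)
    (fun s hs => (hy' s hs.1).continuousWithinAt.mono Icc_subset_Ici_self)
    (fun s hs => (hy' s hs.1).mono (Ici_subset_Ici.2 hs.1)) hyT t ⟨ht, le_rfl⟩ i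

theorem ContinuousLinearMap.intervalIntegral_nonneg {E : Type*} [NormedAddCommGroup E]
    [NormedSpace ℝ E] [CompleteSpace E] (L : E →L[ℝ] ℝ) {f : ℝ → E} {a b : ℝ} (hab : a ≤ b)
    (hf : ∀ u ∈ Icc a b, 0 ≤ L (f u)) : 0 ≤ L (∫ u in a..b, f u) := by
  by_cases hfi : IntervalIntegrable f MeasureTheory.volume a b
  · rw [← L.intervalIntegral_comp_comm hfi]
    exact intervalIntegral.integral_nonneg hab hf
  · rw [intervalIntegral.integral_undef hfi, map_zero]

theorem stmt_16_general (m : ℕ) (lam : ℝ) (hlam : 0 ≤ lam)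
    (F : ℝ → Matrix (Fin m) (Fin m) ℝ) (g : ℝ → Fin m → ℝ) (M : ℝ → ℝ)
    (hFc : ∀ i j, ContinuousOn (fun t => F t i j) (Set.Ici 0))
    (hMc : ContinuousOn M (Set.Ici 0))
    (hg0 : ∀ t ≥ (0:ℝ), ∀ i, 0 ≤ g t i)
    (hMetzler : ∀ t ≥ (0:ℝ), ∀ i j,
      0 ≤ (F t + M t • (1 : Matrix (Fin m) (Fin m) ℝ)) i j)
    (A : ℝ → Matrix (Fin m) (Fin m) ℝ)
    (hA : ∀ t ≥ (0:ℝ), ∀ i j,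
      HasDerivWithinAt (fun s => A s i j) ((F t * A t) i j) (Set.Ici 0) t)
    (hAinv : ∀ t ≥ (0:ℝ), IsUnit (A t))
    (I : ℝ → Fin m → ℝ)
    (hI : ∀ T ≥ (0:ℝ),
      Tendsto (fun S => ∫ t in T..S, Matrix.vecMul (g t) (A t)) atTop (𝓝 (I T)))
    (ψ : ℝ → Fin m → ℝ)
    (hψdef : ∀ T : ℝ, ψ T = lam • Matrix.vecMul (I T) (A T)⁻¹) :
    ∀ T ≥ (0:ℝ), ∀ i, 0 ≤ ψ T i := by
  intro T hT i
  have hTsub : Ici T ⊆ Ici (0 : ℝ) := Ici_subset_Ici.2 hT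
  have hΦ : ∀ t ≥ T, ∀ k, 0 ≤ (A t * (A T)⁻¹) k i := fun t ht k =>
    mul_inv_apply_nonneg_of_metzler (fun k l => (hFc k l).mono hTsub) (hMc.mono hTsub)
      (fun s hs => hMetzler s (hT.trans hs)) (fun s hs k l => (hA s (hT.trans hs) k l).mono hTsub)
      (hAinv T hT) ht k i
  let L : (Fin m → ℝ) →L[ℝ] ℝ :=
    LinearMap.toContinuousLinearMap ((LinearMap.proj i).comp (vecMulLinear (A T)⁻¹))
  have hL : ∀ v, L v = (v ᵥ* (A T)⁻¹) i := fun v => rfl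
  rw [hψdef, Pi.smul_apply, smul_eq_mul, ← hL]
  refine mul_nonneg hlam (ge_of_tendsto ((L.continuous.tendsto _).comp (hI T hT)) ?_)
  filter_upwards [Ici_mem_atTop T] with S hS
  refine L.intervalIntegral_nonneg hS fun t ht => ?_
  rw [hL, vecMul_vecMul]
  exact dotProduct_nonneg_of_nonneg (hg0 t (hT.trans ht.1)) (hΦ t ht.1)

/-- Main assertion of Proposition 8 ('mon') of the paper, in abstract form: if
`λ ≥ 0`, `g(t)` is componentwise nonnegative, `F(t) + M(t)·1` is entrywise
nonnegative (Metzler-type condition), `A` is the (invertible) fundamental matrix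
of `x' = F(t)x`, the improper integral `I(T) = ∫_T^∞ g·A` converges for every
`T ≥ 0`, and `ψ(T) = λ·I(T)·A(T)⁻¹` is the adjoint variable given by the
Aseev–Kryazhimskii Cauchy-type formula, then `ψ(T)` is componentwise nonnegative
for every `T ≥ 0`. -/
theorem stmt_16 (m : ℕ) (lam : ℝ) (hlam : 0 ≤ lam)
    (F : ℝ → Matrix (Fin m) (Fin m) ℝ) (g : ℝ → Fin m → ℝ) (M : ℝ → ℝ)
    (hFc : ∀ i j, ContinuousOn (fun t => F t i j) (Set.Ici 0))
    (hgc : ∀ i, ContinuousOn (fun t => g t i) (Set.Ici 0))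
    (hMc : ContinuousOn M (Set.Ici 0))
    (hg0 : ∀ t ≥ (0:ℝ), ∀ i, 0 ≤ g t i)
    (hMetzler : ∀ t ≥ (0:ℝ), ∀ i j,
      0 ≤ (F t + M t • (1 : Matrix (Fin m) (Fin m) ℝ)) i j)
    (A : ℝ → Matrix (Fin m) (Fin m) ℝ)
    (hA : ∀ t ≥ (0:ℝ), ∀ i j,
      HasDerivWithinAt (fun s => A s i j) ((F t * A t) i j) (Set.Ici 0) t)
    (hA0 : A 0 = 1)
    (hAinv : ∀ t ≥ (0:ℝ), IsUnit (A t))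
    (I : ℝ → Fin m → ℝ)
    (hI : ∀ T ≥ (0:ℝ),
      Tendsto (fun S => ∫ t in T..S, Matrix.vecMul (g t) (A t)) atTop (𝓝 (I T)))
    (ψ : ℝ → Fin m → ℝ)
    (hψdef : ∀ T : ℝ, ψ T = lam • Matrix.vecMul (I T) (A T)⁻¹) :
    ∀ T ≥ (0:ℝ), ∀ i, 0 ≤ ψ T i :=
  stmt_16_general m lam hlam F g M hFc hMc hg0 hMetzler A hA hAinv I hI ψ hψdef
end
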